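/- arXiv:1206.3094 — 13 statements merged into one kernel-verified Lean document; each statement's English description precedes it below -/
import Mathlib

section
/- Let f ∈ L²(ℝ) and Δ > 0, and define F_Δ(u) = Σ_{j∈ℤ} |f(u + jΔ)| for u ∈ [0,Δ]. Then Σ_{h∈ℤ} ∫_ℝ |f(-s)| |f(hΔ - s)| ds = ∫_0^Δ F_Δ(u)² du (as an identity in [0,∞]). In particular, if F_Δ ∈ L²([0,Δ]), then the autocovariance function γ_f(h) = σ² ∫_ℝ f(-s) f(h-s) ds (σ² > 0 a fixed constant) satisfies Σ_{h∈ℤ} |γ_f(hΔ)| < ∞. -/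
/-! Tiling ℝ by the translates `(0, Δ] + jΔ` turns `∫ |f(-s)| |f(hΔ - s)| ds` into
`∑ⱼ ∫₀^Δ |f(u + jΔ)| |f(u + (j + h)Δ)| du`. Everything is nonnegative, so the sum over `h` may be
moved under the integral, where `∑ₕ ∑ⱼ aⱼ aⱼ₊ₕ = (∑ⱼ aⱼ)²`. Finiteness then gives summability of
`γ_f(hΔ)` through `|γ_f(x)| ≤ |σ²| ∫ |f(-s)| |f(x - s)| ds`. -/

open MeasureTheory
open scoped ENNReal

/-- The autocovariance function of a moving average process with kernel `f`
and driving Lévy process of variance `σ2`. -/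
noncomputable def autocov (f : ℝ → ℝ) (σ2 : ℝ) (h : ℝ) : ℝ :=
  σ2 * ∫ s : ℝ, f (-s) * f (h - s)

open Set

theorem lintegral_eq_tsum_setLIntegral_Ioc_add_mul {T : ℝ} (hT : 0 < T) (g : ℝ → ℝ≥0∞) :
    ∫⁻ t, g t = ∑' j : ℤ, ∫⁻ u in Ioc 0 T, g (u + j * T) := by
  let e : ℤ ≃ AddSubgroup.zmultiples T := Equiv.ofBijective
    (codRestrict (fun n : ℤ ↦ n • T) (AddSubgroup.zmultiples T) fun n ↦
      AddSubgroup.zsmul_mem_zmultiples T n)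
    (Equiv.ofInjective (fun n : ℤ ↦ n • T) (zsmul_left_strictMono hT).injective).bijective
  rw [(isAddFundamentalDomain_Ioc hT 0 volume).lintegral_eq_tsum'' g, zero_add, ← e.tsum_eq]
  refine tsum_congr fun j ↦ lintegral_congr fun u ↦ ?_
  show g (j • T + u) = g (u + j * T)
  rw [zsmul_eq_mul, add_comm]

theorem ENNReal.tsum_tsum_mul_add_eq_sq {ι : Type*} [AddGroup ι] (A : ι → ℝ≥0∞) :
    ∑' h, ∑' j, A j * A (j + h) = (∑' j, A j) ^ 2 := by
  calc ∑' h, ∑' j, A j * A (j + h) = ∑' j, A j * ∑' h, A (j + h) := by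
        rw [ENNReal.tsum_comm]
        exact tsum_congr fun j ↦ ENNReal.tsum_mul_left
    _ = ∑' j, A j * ∑' k, A k := tsum_congr fun j ↦ by
        rw [← (Equiv.addLeft j).tsum_eq A, Equiv.coe_addLeft]
    _ = (∑' j, A j) ^ 2 := by rw [ENNReal.tsum_mul_right, sq]

theorem lintegral_comp_neg_mul_comp_sub (g : ℝ → ℝ≥0∞) (c : ℝ) :
    ∫⁻ s, g (-s) * g (c - s) = ∫⁻ t, g t * g (t + c) := by
  rw [← lintegral_neg_eq_self]
  simp [add_comm]

theorem tsum_lintegral_mul_add_mul_eq_lintegral_sq {T : ℝ} (hT : 0 < T) {g : ℝ → ℝ≥0∞}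
    (hg : Measurable g) :
    ∑' h : ℤ, ∫⁻ t, g t * g (t + h * T) = ∫⁻ u in Ioc 0 T, (∑' j : ℤ, g (u + j * T)) ^ 2 := by
  have hterm : ∀ h j : ℤ, Measurable fun u ↦ g (u + j * T) * g (u + ↑(j + h) * T) :=
    fun _ _ ↦ (hg.comp (measurable_add_const _)).mul (hg.comp (measurable_add_const _))
  calc ∑' h : ℤ, ∫⁻ t, g t * g (t + h * T)
      = ∑' h : ℤ, ∑' j : ℤ, ∫⁻ u in Ioc 0 T, g (u + j * T) * g (u + ↑(j + h) * T) := by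
        simp only [lintegral_eq_tsum_setLIntegral_Ioc_add_mul hT, Int.cast_add, add_mul, add_assoc]
    _ = ∫⁻ u in Ioc 0 T, ∑' h : ℤ, ∑' j : ℤ, g (u + j * T) * g (u + ↑(j + h) * T) := by
        rw [lintegral_tsum fun h ↦ (Measurable.tsum fun j ↦ hterm h j).aemeasurable]
        simp only [lintegral_tsum fun j ↦ (hterm _ j).aemeasurable]
    _ = ∫⁻ u in Ioc 0 T, (∑' j : ℤ, g (u + j * T)) ^ 2 := by
        simp only [ENNReal.tsum_tsum_mul_add_eq_sq fun j : ℤ ↦ g (_ + j * T)]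

theorem abs_autocov_le (f : ℝ → ℝ) (σ2 x : ℝ) :
    |autocov f σ2 x| ≤ |σ2| * (∫⁻ s, ENNReal.ofReal (|f (-s)| * |f (x - s)|)).toReal := by
  rw [autocov, abs_mul]
  gcongr
  simpa [abs_mul, ofReal_norm] using norm_integral_le_lintegral_norm
    fun s ↦ f (-s) * f (x - s)

theorem summable_abs_autocov_of_tsum_lintegral_ne_top {ι : Type*} (f : ℝ → ℝ) (σ2 : ℝ)
    (x : ι → ℝ)
    (hfin : ∑' i, ∫⁻ s, ENNReal.ofReal (|f (-s)| * |f (x i - s)|) ≠ ∞) :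
    Summable fun i ↦ |autocov f σ2 (x i)| :=
  .of_nonneg_of_le (fun _ ↦ abs_nonneg _) (fun i ↦ abs_autocov_le f σ2 (x i))
    ((ENNReal.summable_toReal hfin).mul_left |σ2|)

theorem statement0_general (f : ℝ → ℝ) (hf_meas : Measurable f)
    (Δ : ℝ) (hΔ : 0 < Δ) (σ2 : ℝ) :
    (∑' h : ℤ, ∫⁻ s : ℝ, ENNReal.ofReal (|f (-s)| * |f ((h : ℝ) * Δ - s)|))
      = ∫⁻ u in Set.Ioc (0 : ℝ) Δ,
          (∑' j : ℤ, ENNReal.ofReal |f (u + (j : ℝ) * Δ)|) ^ 2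
    ∧ ((∫⁻ u in Set.Ioc (0 : ℝ) Δ,
          (∑' j : ℤ, ENNReal.ofReal |f (u + (j : ℝ) * Δ)|) ^ 2) < ∞ →
        Summable (fun h : ℤ => |autocov f σ2 ((h : ℝ) * Δ)|)) := by
  have periodization := tsum_lintegral_mul_add_mul_eq_lintegral_sq
    (g := fun t ↦ ENNReal.ofReal |f t|) hΔ (by fun_prop)
  have hEq : (∑' h : ℤ, ∫⁻ s : ℝ, ENNReal.ofReal (|f (-s)| * |f ((h : ℝ) * Δ - s)|))
      = ∫⁻ u in Set.Ioc (0 : ℝ) Δ, (∑' j : ℤ, ENNReal.ofReal |f (u + (j : ℝ) * Δ)|) ^ 2 := by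
    simp only [ENNReal.ofReal_mul (abs_nonneg _)]
    simpa only [← lintegral_comp_neg_mul_comp_sub] using periodization
  exact ⟨hEq, fun hfin ↦ summable_abs_autocov_of_tsum_lintegral_ne_top f σ2 _ (hEq ▸ hfin.ne)⟩

/-- For `f ∈ L²(ℝ)` and `Δ > 0`, with `F_Δ(u) = ∑_{j∈ℤ} |f(u+jΔ)|`,
one has `∑_{h∈ℤ} ∫ |f(-s)||f(hΔ-s)| ds = ∫₀^Δ F_Δ(u)² du` as an identity in `[0,∞]`;
and if `F_Δ ∈ L²([0,Δ])`, then `∑_{h∈ℤ} |γ_f(hΔ)| < ∞`. -/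
theorem statement0 (f : ℝ → ℝ) (hf_meas : Measurable f) (hf : MemLp f 2 volume)
    (Δ : ℝ) (hΔ : 0 < Δ) (σ2 : ℝ) (hσ2 : 0 < σ2) :
    (∑' h : ℤ, ∫⁻ s : ℝ, ENNReal.ofReal (|f (-s)| * |f ((h : ℝ) * Δ - s)|))
      = ∫⁻ u in Set.Ioc (0 : ℝ) Δ,
          (∑' j : ℤ, ENNReal.ofReal |f (u + (j : ℝ) * Δ)|) ^ 2
    ∧ ((∫⁻ u in Set.Ioc (0 : ℝ) Δ,
          (∑' j : ℤ, ENNReal.ofReal |f (u + (j : ℝ) * Δ)|) ^ 2) < ∞ →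
        Summable (fun h : ℤ => |autocov f σ2 ((h : ℝ) * Δ)|)) :=
  statement0_general f hf_meas Δ hΔ σ2
end

section
/- Let f ∈ L²(ℝ), Δ > 0 and σ² > 0, and suppose that F_Δ(u) = Σ_{j∈ℤ} |f(u + jΔ)| belongs to L²([0,Δ]). Then Σ_{j∈ℤ} γ_f(jΔ) converges absolutely and Σ_{j∈ℤ} γ_f(jΔ) = σ² ∫_0^Δ ( Σ_{j∈ℤ} f(u + jΔ) )² du. -/
/-!
Cutting `ℝ` into the cells `(kΔ, (k+1)Δ]` writes `∫ f(t) f(t + jΔ) dt` as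
`∑ₖ ∫₀^Δ φₖ φₖ₊ⱼ`, where `φₖ(u) = f(u + kΔ)`. Summing over `j` as well gives the double
series `∑_{k,m} ∫₀^Δ φₖ φₘ`, which is `∫₀^Δ (∑ₖ φₖ)²` by Fubini–Tonelli; the hypothesis
`∫₀^Δ F_Δ² < ∞` is exactly the absolute convergence that justifies every rearrangement.
-/

open MeasureTheory
open scoped ENNReal

open Set

lemma autocov_eq_integral_mul_add (f : ℝ → ℝ) (σ2 h : ℝ) :
    autocov f σ2 h = σ2 * ∫ t, f t * f (t + h) := by
  rw [autocov, ← integral_neg_eq_self]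
  simp [sub_eq_add_neg, add_comm]

lemma hasSum_setIntegral_Ioc_add_zsmul {E : Type*} [NormedAddCommGroup E] [NormedSpace ℝ E]
    {g : ℝ → E} (hg : Integrable g) {Δ : ℝ} (hΔ : 0 < Δ) (a : ℝ) :
    HasSum (fun k : ℤ => ∫ u in Ioc a (a + Δ), g (u + k * Δ)) (∫ t, g t) := by
  have hcover := iUnion_Ioc_add_zsmul hΔ a
  have h := hasSum_integral_iUnion (fun _ => measurableSet_Ioc)
    (pairwise_disjoint_Ioc_add_zsmul a Δ) (by rw [hcover]; exact hg.integrableOn)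
  rw [hcover, Measure.restrict_univ] at h
  simp only [zsmul_eq_mul, Int.cast_add, Int.cast_one, add_one_mul, ← add_assoc] at h
  convert h using 2 with k
  rw [← intervalIntegral.integral_of_le (by linarith), intervalIntegral.integral_comp_add_right,
    ← intervalIntegral.integral_of_le (by linarith), add_right_comm]

section SquareOfSeries

variable {α ι : Type*} [MeasurableSpace α] {μ : Measure α} [Countable ι] {φ : ι → α → ℝ}

lemma tsum_lintegral_enorm_mul (hφ : ∀ i, AEStronglyMeasurable (φ i) μ) :
    ∑' p : ι × ι, ∫⁻ x, ‖φ p.1 x * φ p.2 x‖ₑ ∂μ = ∫⁻ x, (∑' i, ‖φ i x‖ₑ) ^ 2 ∂μ := by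
  rw [← lintegral_tsum (f := fun (p : ι × ι) x => ‖φ p.1 x * φ p.2 x‖ₑ)
    fun p => ((hφ p.1).mul (hφ p.2)).enorm]
  refine lintegral_congr fun x => ?_
  simp only [enorm_mul]
  rw [ENNReal.tsum_prod (f := fun k m => ‖φ k x‖ₑ * ‖φ m x‖ₑ)]
  simp_rw [ENNReal.tsum_mul_left, ENNReal.tsum_mul_right, sq]

variable (hφ : ∀ i, AEStronglyMeasurable (φ i) μ)
  (hfin : ∫⁻ x, (∑' i, ‖φ i x‖ₑ) ^ 2 ∂μ ≠ ∞)
include hφ hfin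

lemma integrable_mul_of_lintegral_tsum_enorm_sq_ne_top (p : ι × ι) :
    Integrable (fun x => φ p.1 x * φ p.2 x) μ := by
  rw [← tsum_lintegral_enorm_mul hφ] at hfin
  exact ⟨(hφ p.1).mul (hφ p.2),
    (ENNReal.le_tsum p).trans_lt (lt_top_iff_ne_top.2 hfin)⟩

lemma summable_integral_norm_mul_of_lintegral_tsum_enorm_sq_ne_top :
    Summable fun p : ι × ι => ∫ x, ‖φ p.1 x * φ p.2 x‖ ∂μ := by
  rw [← tsum_lintegral_enorm_mul hφ] at hfin
  exact (ENNReal.summable_toReal hfin).congr fun p =>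
    (integral_norm_eq_lintegral_enorm ((hφ p.1).mul (hφ p.2))).symm

lemma hasSum_integral_mul_of_lintegral_tsum_enorm_sq_ne_top :
    HasSum (fun p : ι × ι => ∫ x, φ p.1 x * φ p.2 x ∂μ) (∫ x, (∑' i, φ i x) ^ 2 ∂μ) := by
  have hfinite : ∀ᵐ x ∂μ, (∑' i, ‖φ i x‖ₑ) ^ 2 < ∞ :=
    ae_lt_top' ((AEMeasurable.tsum fun i => (hφ i).enorm).pow_const 2) hfin
  have hpointwise :
      (fun x => ∑' p : ι × ι, φ p.1 x * φ p.2 x) =ᵐ[μ] fun x => (∑' i, φ i x) ^ 2 := by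
    filter_upwards [hfinite] with x hx
    have hsum : Summable fun i => ‖φ i x‖ := by
      simpa using ENNReal.summable_toReal
        ((ENNReal.pow_ne_top_iff.1 hx.ne).resolve_right two_ne_zero)
    rw [sq, tsum_mul_tsum_of_summable_norm hsum hsum]
  rw [← integral_congr_ae hpointwise]
  exact hasSum_integral_of_summable_integral_norm
    (integrable_mul_of_lintegral_tsum_enorm_sq_ne_top hφ hfin)
    (summable_integral_norm_mul_of_lintegral_tsum_enorm_sq_ne_top hφ hfin)

end SquareOfSeries

section Shear

variable {E : Type*} [NormedAddCommGroup E]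

lemma summable_norm_of_hasSum_fiberwise {β γ : Type*} [CompleteSpace E] {f : β × γ → E}
    (hf : Summable fun p => ‖f p‖) {I : β → E} (hI : ∀ b, HasSum (fun c => f (b, c)) (I b)) :
    Summable fun b => ‖I b‖ :=
  hf.prod.of_nonneg_of_le (fun _ => norm_nonneg _) fun b =>
    (hI b).tsum_eq ▸ norm_tsum_le_tsum_norm (hf.prod_factor b)

lemma summable_norm_and_hasSum_of_hasSum_add_fiber {G : Type*} [AddGroup G] [CompleteSpace E]
    {f : G × G → E} (hf : Summable fun p => ‖f p‖) {I : G → E}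
    (hI : ∀ j, HasSum (fun k => f (k, k + j)) (I j)) :
    Summable (fun j => ‖I j‖) ∧ HasSum I (∑' p, f p) := by
  let e : G × G ≃ G × G :=
    (Equiv.prodComm G G).trans (Equiv.prodShear (Equiv.refl G) Equiv.addLeft)
  have hfe : Summable fun q => ‖f (e q)‖ := e.summable_iff.2 hf
  exact ⟨summable_norm_of_hasSum_fiberwise hfe hI,
    (e.hasSum_iff.2 hf.of_norm.hasSum).prod_fiberwise hI⟩

end Shear

theorem statement1_general (f : ℝ → ℝ) (hf : MemLp f 2 volume)
    (Δ : ℝ) (hΔ : 0 < Δ) (σ2 : ℝ)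
    (hF : (∫⁻ u in Set.Ioc (0 : ℝ) Δ,
        (∑' j : ℤ, ENNReal.ofReal |f (u + (j : ℝ) * Δ)|) ^ 2) < ∞) :
    Summable (fun j : ℤ => |autocov f σ2 ((j : ℝ) * Δ)|)
    ∧ (∑' j : ℤ, autocov f σ2 ((j : ℝ) * Δ))
        = σ2 * ∫ u in Set.Ioc (0 : ℝ) Δ, (∑' j : ℤ, f (u + (j : ℝ) * Δ)) ^ 2 := by
  set φ : ℤ → ℝ → ℝ := fun k u => f (u + k * Δ)
  have hφ (k : ℤ) : AEStronglyMeasurable (φ k) (volume.restrict (Ioc 0 Δ)) :=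
    (hf.1.comp_measurePreserving (measurePreserving_add_right volume _)).restrict
  have hfin : ∫⁻ u in Ioc 0 Δ, (∑' k, ‖φ k u‖ₑ) ^ 2 ≠ ∞ := by
    simpa only [φ, Real.enorm_eq_ofReal_abs] using hF.ne
  set g : ℤ × ℤ → ℝ := fun p => ∫ u in Ioc 0 Δ, φ p.1 u * φ p.2 u
  have hg_norm : Summable fun p => ‖g p‖ :=
    (summable_integral_norm_mul_of_lintegral_tsum_enorm_sq_ne_top hφ hfin).of_nonneg_of_le
      (fun _ => norm_nonneg _) fun _ => norm_integral_le_integral_norm _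
  have hfiber (j : ℤ) : HasSum (fun k => g (k, k + j)) (∫ t, f t * f (t + j * Δ)) := by
    simpa [g, φ, add_mul, add_assoc] using hasSum_setIntegral_Ioc_add_zsmul
      (hf.integrable_mul (hf.comp_measurePreserving (measurePreserving_add_right volume _))) hΔ 0
  obtain ⟨hsummable, hsum⟩ := summable_norm_and_hasSum_of_hasSum_add_fiber hg_norm hfiber
  simp only [autocov_eq_integral_mul_add, abs_mul]
  refine ⟨by simpa only [Real.norm_eq_abs] using hsummable.mul_left |σ2|, ?_⟩
  rw [tsum_mul_left, hsum.tsum_eq,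
    (hasSum_integral_mul_of_lintegral_tsum_enorm_sq_ne_top hφ hfin).tsum_eq]

/-- if `f ∈ L²(ℝ)`, `Δ > 0`, `σ² > 0` and the periodization
`F_Δ(u) = ∑_{j∈ℤ} |f(u+jΔ)|` is in `L²([0,Δ])`, then `∑_{j∈ℤ} γ_f(jΔ)` converges
absolutely and equals `σ² ∫₀^Δ (∑_{j∈ℤ} f(u+jΔ))² du`. -/
theorem statement1 (f : ℝ → ℝ) (hf_meas : Measurable f) (hf : MemLp f 2 volume)
    (Δ : ℝ) (hΔ : 0 < Δ) (σ2 : ℝ) (hσ2 : 0 < σ2)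
    (hF : (∫⁻ u in Set.Ioc (0 : ℝ) Δ,
        (∑' j : ℤ, ENNReal.ofReal |f (u + (j : ℝ) * Δ)|) ^ 2) < ∞) :
    Summable (fun j : ℤ => |autocov f σ2 ((j : ℝ) * Δ)|)
    ∧ (∑' j : ℤ, autocov f σ2 ((j : ℝ) * Δ))
        = σ2 * ∫ u in Set.Ioc (0 : ℝ) Δ, (∑' j : ℤ, f (u + (j : ℝ) * Δ)) ^ 2 :=
  statement1_general f hf Δ hΔ σ2 hF
end

section
/- Define f : ℝ → ℝ by f(u) = 0 for u ≤ 0, f(u) = 1 for u ∈ [0,1), and f(u) = (1·3···(2j-1))/(2^j j!) · (u-j)^j for u ∈ [j, j+1), j ≥ 1. Then f ∈ L¹(ℝ) ∩ L²(ℝ), for every u ∈ [0,1) one has F_1(u) = Σ_{j∈ℤ} |f(u+j)| = (1-u)^{-1/2}, and F_1 ∈ L¹([0,1]) but F_1 ∉ L²([0,1]). -/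
/-! The coefficients `c_j = centralBinom j / 4 ^ j` of `f` are the Taylor coefficients of
`(1 - x)^{-1/2}`, so for `u ∈ [0,1)` the periodization `∑ⱼ |f (u + j)| = ∑ⱼ≥0 c_j u^j` is exactly
`(1 - u)^{-1/2}`. Cutting `ℝ` into unit intervals gives `∫ |f| = ∫₀¹ F₁ = ∫₀¹ (1 - u)^{-1/2} < ∞`,
and `0 ≤ f ≤ 1` gives `f² ≤ f`, hence `f ∈ L²`. Finally `F₁² = (1 - u)⁻¹` is not integrable
near `1`. -/

open MeasureTheory
open scoped ENNReal

/-- The kernel `f` of Remark 2.4: `f(u) = 0` for `u < 0`, and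
`f(u) = (1·3···(2j-1))/(2^j j!) (u-j)^j` for `u ∈ [j, j+1)`, `j ∈ ℕ`
(the coefficient being `(2j choose j)/4^j`, the `j`-th binomial coefficient of
`(1-x)^{-1/2}`). -/
noncomputable def remarkKernel (u : ℝ) : ℝ :=
  if u < 0 then 0
  else ((Nat.centralBinom ⌊u⌋₊ : ℝ) / 4 ^ ⌊u⌋₊) * (u - ⌊u⌋₊) ^ ⌊u⌋₊

open Set

theorem Ring.multichoose_half {K : Type*} [Field K] [CharZero K] (n : ℕ) :
    Ring.multichoose (1 / 2 : K) n = n.centralBinom / 4 ^ n := by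
  have heval : (ascPochhammer K n).eval (1 / 2 : K) = n.factorial * (n.centralBinom / 4 ^ n) := by
    induction n with
    | zero => simp
    | succ n ih =>
      have hrec : ((n + 1 : ℕ) : K) * (n + 1).centralBinom = 2 * (2 * n + 1) * n.centralBinom := by
        exact_mod_cast Nat.succ_mul_centralBinom_succ n
      rw [ascPochhammer_succ_eval, ih, Nat.factorial_succ]
      push_cast at hrec ⊢
      rw [pow_succ]
      field_simp
      linear_combination -2 * (n.factorial : K) * hrec
  have h := Ring.factorial_nsmul_multichoose_eq_ascPochhammer (1 / 2 : K) n
  rw [nsmul_eq_mul, Polynomial.ascPochhammer_smeval_eq_eval, heval] at h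
  exact mul_left_cancel₀ (by exact_mod_cast n.factorial_ne_zero) h

theorem hasSum_centralBinom_div_four_pow_mul_pow {x : ℝ} (hx : |x| < 1) :
    HasSum (fun n : ℕ => (n.centralBinom / 4 ^ n : ℝ) * x ^ n) ((1 - x) ^ (-(1 / 2 : ℝ))) := by
  have h := (Real.one_div_one_sub_rpow_hasFPowerSeriesOnBall_zero (1 / 2)).hasSum
    (y := x) (by rwa [Metric.mem_eball, edist_zero_right, Real.enorm_eq_ofReal_abs,
      ENNReal.ofReal_lt_one])
  simp only [FormalMultilinearSeries.ofScalars_apply_eq, smul_eq_mul, zero_add] at h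
  rw [Real.rpow_neg (by linarith [le_abs_self x]), inv_eq_one_div]
  simpa only [← Ring.multichoose_eq, Ring.multichoose_half] using h

theorem lintegral_eq_setLIntegral_Ico_tsum_add_intCast {f : ℝ → ℝ≥0∞} (hf : Measurable f) :
    ∫⁻ x, f x = ∫⁻ u in Ico 0 1, ∑' n : ℤ, f (u + n) := by
  have htranslate (n : ℤ) : ∫⁻ u in Ico 0 1, f (u + n) = ∫⁻ x in Ico (n : ℝ) (n + 1), f x := by
    have h := (measurePreserving_add_right volume (n : ℝ)).setLIntegral_comp_preimage_emb
      (measurableEmbedding_addRight (n : ℝ)) f (Ico (n : ℝ) (n + 1))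
    rwa [preimage_add_const_Ico, sub_self, add_sub_cancel_left] at h
  rw [lintegral_tsum (f := fun (n : ℤ) (u : ℝ) => f (u + n))
      fun n => (hf.comp (measurable_add_const _)).aemeasurable,
    tsum_congr htranslate, ← lintegral_iUnion (fun _ => measurableSet_Ico)
      (pairwise_disjoint_Ico_intCast ℝ), iUnion_Ico_intCast, setLIntegral_univ]

theorem integrableOn_one_sub_rpow_Ioo_iff {s : ℝ} :
    IntegrableOn (fun u : ℝ => (1 - u) ^ s) (Ioo 0 1) ↔ -1 < s := by
  have h := (Measure.measurePreserving_sub_left volume (1 : ℝ)).integrableOn_comp_preimage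
    (measurableEmbedding_subLeft (1 : ℝ)) (f := fun x : ℝ => x ^ s) (s := Ioo 0 1)
  rw [preimage_const_sub_Ioo, sub_self, sub_zero] at h
  exact h.trans (intervalIntegral.integrableOn_Ioo_rpow_iff one_pos)

lemma remarkKernel_of_neg {u : ℝ} (hu : u < 0) : remarkKernel u = 0 := if_pos hu

lemma remarkKernel_of_nonneg {u : ℝ} (hu : 0 ≤ u) :
    remarkKernel u = (⌊u⌋₊.centralBinom / 4 ^ ⌊u⌋₊ : ℝ) * (u - ⌊u⌋₊) ^ ⌊u⌋₊ :=
  if_neg hu.not_gt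

lemma remarkKernel_add_natCast {u : ℝ} (h0 : 0 ≤ u) (h1 : u < 1) (n : ℕ) :
    remarkKernel (u + n) = (n.centralBinom / 4 ^ n : ℝ) * u ^ n := by
  have hfloor : ⌊u + n⌋₊ = n := by
    rw [Nat.floor_add_natCast h0, Nat.floor_eq_zero.mpr h1, zero_add]
  rw [remarkKernel_of_nonneg (by positivity), hfloor, add_sub_cancel_right]

lemma remarkKernel_nonneg (u : ℝ) : 0 ≤ remarkKernel u := by
  rcases lt_or_ge u 0 with hu | hu
  · rw [remarkKernel_of_neg hu]
  · rw [remarkKernel_of_nonneg hu]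
    exact mul_nonneg (by positivity) (pow_nonneg (sub_nonneg.mpr (Nat.floor_le hu)) _)

lemma remarkKernel_le_one (u : ℝ) : remarkKernel u ≤ 1 := by
  rcases lt_or_ge u 0 with hu | hu
  · rw [remarkKernel_of_neg hu]; exact zero_le_one
  · rw [remarkKernel_of_nonneg hu]
    have hcoeff : (⌊u⌋₊.centralBinom / 4 ^ ⌊u⌋₊ : ℝ) ≤ 1 := by
      rw [div_le_one (by positivity)]
      exact_mod_cast Nat.centralBinom_le_four_pow _
    have hfract : (u - ⌊u⌋₊) ^ ⌊u⌋₊ ≤ 1 :=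
      pow_le_one₀ (sub_nonneg.mpr (Nat.floor_le hu)) (by linarith [Nat.lt_floor_add_one u])
    exact mul_le_one₀ hcoeff (pow_nonneg (sub_nonneg.mpr (Nat.floor_le hu)) _) hfract

lemma measurable_remarkKernel : Measurable remarkKernel := by
  refine Measurable.ite measurableSet_Iio measurable_const ?_
  have hfloor : Measurable fun u : ℝ => ⌊u⌋₊ := Nat.measurable_floor
  exact ((measurable_from_nat (f := fun n : ℕ => (n.centralBinom : ℝ) / 4 ^ n)).comp hfloor).mul
    ((measurable_id.sub (measurable_from_nat.comp hfloor)).pow hfloor)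

lemma hasSum_abs_remarkKernel_add_intCast {u : ℝ} (h0 : 0 ≤ u) (h1 : u < 1) :
    HasSum (fun j : ℤ => |remarkKernel (u + j)|) ((1 - u) ^ (-(1 / 2 : ℝ))) := by
  have hneg : ∀ j ∉ range ((↑) : ℕ → ℤ), |remarkKernel (u + j)| = 0 := by
    intro j hj
    have hj : j ≤ -1 := by
      by_contra! h
      exact hj ⟨j.toNat, Int.toNat_of_nonneg (by omega)⟩
    have : (j : ℝ) ≤ -1 := by exact_mod_cast hj
    rw [remarkKernel_of_neg (by linarith), abs_zero]
  rw [← Nat.cast_injective.hasSum_iff hneg]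
  convert hasSum_centralBinom_div_four_pow_mul_pow (x := u) (by rwa [abs_of_nonneg h0]) using 1
  ext n
  rw [Function.comp_apply, Int.cast_natCast, remarkKernel_add_natCast h0 h1,
    abs_of_nonneg (by positivity)]

theorem integrableOn_one_sub_rpow_neg_half :
    IntegrableOn (fun u : ℝ => (1 - u) ^ (-(1 / 2 : ℝ))) (Icc 0 1) := by
  rw [integrableOn_Icc_iff_integrableOn_Ioo, integrableOn_one_sub_rpow_Ioo_iff]
  norm_num

theorem not_memLp_two_one_sub_rpow_neg_half :
    ¬ MemLp (fun u : ℝ => (1 - u) ^ (-(1 / 2 : ℝ))) 2 (volume.restrict (Icc 0 1)) := by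
  intro h
  have hsq : IntegrableOn (fun u : ℝ => ((1 - u) ^ (-(1 / 2 : ℝ))) ^ 2) (Icc 0 1) :=
    h.integrable_sq
  have hinv : IntegrableOn (fun u : ℝ => (1 - u) ^ (-1 : ℝ)) (Ioo 0 1) := by
    refine (hsq.mono_set Ioo_subset_Icc_self).congr_fun (fun u hu => ?_) measurableSet_Ioo
    dsimp only
    rw [← Real.rpow_natCast, ← Real.rpow_mul (by linarith [hu.2])]
    norm_num
  exact lt_irrefl _ (integrableOn_one_sub_rpow_Ioo_iff.mp hinv)

theorem integrable_remarkKernel : Integrable remarkKernel := by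
  refine ⟨measurable_remarkKernel.aestronglyMeasurable, ?_⟩
  have hperiod : ∫⁻ x, ‖remarkKernel x‖ₑ
      = ∫⁻ u in Ico 0 1, ENNReal.ofReal ((1 - u) ^ (-(1 / 2 : ℝ))) := by
    rw [lintegral_eq_setLIntegral_Ico_tsum_add_intCast measurable_remarkKernel.enorm]
    refine setLIntegral_congr_fun measurableSet_Ico fun u hu => ?_
    have h := hasSum_abs_remarkKernel_add_intCast hu.1 hu.2
    simp_rw [Real.enorm_eq_ofReal_abs]
    rw [← h.tsum_eq, ENNReal.ofReal_tsum_of_nonneg (fun _ => abs_nonneg _) h.summable]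
  rw [HasFiniteIntegral, hperiod]
  exact (integrableOn_one_sub_rpow_neg_half.mono_set Ico_subset_Icc_self).lintegral_lt_top

theorem memLp_two_remarkKernel : MemLp remarkKernel 2 := by
  refine (memLp_two_iff_integrable_sq measurable_remarkKernel.aestronglyMeasurable).mpr ?_
  refine integrable_remarkKernel.mono' (measurable_remarkKernel.pow_const 2).aestronglyMeasurable
    (ae_of_all _ fun u => ?_)
  have h0 := remarkKernel_nonneg u
  have h1 := remarkKernel_le_one u
  rw [Real.norm_eq_abs, abs_of_nonneg (sq_nonneg _)]
  nlinarith

theorem periodization_remarkKernel_ae_eq :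
    (fun u : ℝ => ∑' j : ℤ, |remarkKernel (u + j)|)
      =ᵐ[volume.restrict (Icc 0 1)] fun u => (1 - u) ^ (-(1 / 2 : ℝ)) := by
  rw [← Measure.restrict_congr_set Ico_ae_eq_Icc]
  filter_upwards [ae_restrict_mem measurableSet_Ico] with u hu
  exact (hasSum_abs_remarkKernel_add_intCast hu.1 hu.2).tsum_eq

/-- the kernel above is in `L¹(ℝ) ∩ L²(ℝ)`, its periodization satisfies
`F₁(u) = ∑_{j∈ℤ} |f(u+j)| = (1-u)^{-1/2}` for `u ∈ [0,1)`, and `F₁ ∈ L¹([0,1])`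
while `F₁ ∉ L²([0,1])`. -/
theorem statement3 :
    Integrable remarkKernel volume
    ∧ MemLp remarkKernel 2 volume
    ∧ (∀ u ∈ Set.Ico (0 : ℝ) 1,
        (∑' j : ℤ, |remarkKernel (u + (j : ℝ))|) = (1 - u) ^ (-(1 / 2 : ℝ)))
    ∧ IntegrableOn (fun u : ℝ => ∑' j : ℤ, |remarkKernel (u + (j : ℝ))|)
        (Set.Icc (0 : ℝ) 1) volume
    ∧ ¬ MemLp (fun u : ℝ => ∑' j : ℤ, |remarkKernel (u + (j : ℝ))|) 2
        (volume.restrict (Set.Icc (0 : ℝ) 1)) :=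
  ⟨integrable_remarkKernel, memLp_two_remarkKernel,
    fun _ hu => (hasSum_abs_remarkKernel_add_intCast hu.1 hu.2).tsum_eq,
    integrableOn_one_sub_rpow_neg_half.congr periodization_remarkKernel_ae_eq.symm,
    fun h => not_memLp_two_one_sub_rpow_neg_half (h.ae_eq periodization_remarkKernel_ae_eq)⟩
end

section
/- Let f ∈ L²(ℝ) be nonnegative, Δ > 0 and σ² > 0. Then Σ_{h∈ℤ} |γ_f(hΔ)| < ∞ if and only if the function F_Δ(u) = Σ_{j∈ℤ} f(u + jΔ) belongs to L²([0,Δ]). -/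
/-!
Write `F = ofReal ∘ f`. After the substitution `s ↦ -s`, `γ_f(hΔ) = σ² ∫ F(s) F(s + hΔ) ds`,
and these integrals are finite by Cauchy–Schwarz since `f ∈ L²`. Summing over `h` and splitting
`ℝ` into the translates `(0, Δ] + jΔ` gives, by Tonelli and the `Δ`-periodicity of `F_Δ`,
`∑_h ∫ F(s) F(s + hΔ) ds = ∫ F(s) F_Δ(s) ds = ∫_{(0,Δ]} F_Δ(u)² du`.
-/

open MeasureTheory Set
open scoped ENNReal

theorem ENNReal.summable_toReal_iff {α : Type*} {f : α → ℝ≥0∞} (hf : ∀ a, f a ≠ ∞) :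
    Summable (fun a => (f a).toReal) ↔ ∑' a, f a ≠ ∞ := by
  lift f to α → NNReal using hf
  simpa using ENNReal.tsum_coe_ne_top_iff_summable_coe.symm

theorem MeasureTheory.MemLp.lintegral_ofReal_mul_lt_top {α : Type*} [MeasurableSpace α]
    {μ : Measure α} {f g : α → ℝ} (hf : MemLp f 2 μ) (hg : MemLp g 2 μ) :
    ∫⁻ x, ENNReal.ofReal (f x) * ENNReal.ofReal (g x) ∂μ < ∞ :=
  calc ∫⁻ x, ENNReal.ofReal (f x) * ENNReal.ofReal (g x) ∂μ
      ≤ ∫⁻ x, ‖f x * g x‖ₑ ∂μ := lintegral_mono fun x => by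
        rw [enorm_mul]
        exact mul_le_mul' (Real.ofReal_le_enorm _) (Real.ofReal_le_enorm _)
    _ < ∞ := (hf.integrable_mul hg).hasFiniteIntegral

theorem lintegral_eq_tsum_setLIntegral_Ioc_add_int_mul {Δ : ℝ} (hΔ : 0 < Δ) (K : ℝ → ℝ≥0∞) :
    ∫⁻ x, K x = ∑' j : ℤ, ∫⁻ u in Ioc 0 Δ, K (u + j * Δ) := by
  let e : ℤ ≃ AddSubgroup.zmultiples Δ := Equiv.ofBijective
    (fun j => ⟨j • Δ, AddSubgroup.zsmul_mem_zmultiples Δ j⟩)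
    ⟨fun i j hij => (zsmul_left_strictMono hΔ).injective (congrArg Subtype.val hij),
      fun ⟨_, j, hj⟩ => ⟨j, Subtype.ext hj⟩⟩
  rw [(isAddFundamentalDomain_Ioc hΔ 0 volume).lintegral_eq_tsum'' K, zero_add, ← e.tsum_eq]
  simp [e, add_comm]

noncomputable def periodization (Δ : ℝ) (F : ℝ → ℝ≥0∞) (u : ℝ) : ℝ≥0∞ :=
  ∑' j : ℤ, F (u + j * Δ)

theorem periodic_periodization (Δ : ℝ) (F : ℝ → ℝ≥0∞) :
    Function.Periodic (periodization Δ F) Δ := fun u =>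
  (tsum_congr fun j => congrArg F (by simp only [Equiv.coe_addRight]; push_cast; ring)).trans
    ((Equiv.addRight (1 : ℤ)).tsum_eq fun j : ℤ => F (u + j * Δ))

theorem measurable_periodization (Δ : ℝ) {F : ℝ → ℝ≥0∞} (hF : Measurable F) :
    Measurable (periodization Δ F) :=
  Measurable.tsum fun _ => hF.comp (measurable_add_const _)

theorem tsum_lintegral_mul_add_int_mul {Δ : ℝ} (hΔ : 0 < Δ) {F G : ℝ → ℝ≥0∞}
    (hF : Measurable F) (hG : Measurable G) :
    ∑' h : ℤ, ∫⁻ s, F s * G (s + h * Δ)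
      = ∫⁻ u in Ioc 0 Δ, periodization Δ F u * periodization Δ G u :=
  calc ∑' h : ℤ, ∫⁻ s, F s * G (s + h * Δ)
      = ∫⁻ s, F s * periodization Δ G s := by
        rw [← lintegral_tsum (f := fun (h : ℤ) s => F s * G (s + h * Δ)) fun h => by fun_prop]
        simp_rw [ENNReal.tsum_mul_left, periodization]
    _ = ∑' j : ℤ, ∫⁻ u in Ioc 0 Δ, F (u + j * Δ) * periodization Δ G u := by
        have hper (j : ℤ) u : periodization Δ G (u + j * Δ) = periodization Δ G u :=
          (periodic_periodization Δ G).int_mul j u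
        simp_rw [lintegral_eq_tsum_setLIntegral_Ioc_add_int_mul hΔ, hper]
    _ = ∫⁻ u in Ioc 0 Δ, periodization Δ F u * periodization Δ G u := by
        have hP := measurable_periodization Δ hG
        rw [← lintegral_tsum (f := fun (j : ℤ) u => F (u + j * Δ) * periodization Δ G u)
          fun j => by fun_prop]
        simp_rw [ENNReal.tsum_mul_right, periodization]

theorem autocov_eq_mul_toReal_lintegral {f : ℝ → ℝ} (hf_meas : Measurable f)
    (hf_nonneg : ∀ x, 0 ≤ f x) (σ2 c : ℝ) :
    autocov f σ2 c
      = σ2 * (∫⁻ s, ENNReal.ofReal (f s) * ENNReal.ofReal (f (s + c))).toReal := by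
  rw [autocov, ← integral_neg_eq_self, integral_eq_lintegral_of_nonneg_ae
    (ae_of_all _ fun s => mul_nonneg (hf_nonneg _) (hf_nonneg _)) (by fun_prop)]
  simp_rw [neg_neg, sub_neg_eq_add, ENNReal.ofReal_mul (hf_nonneg _), add_comm c]

/-- for a nonnegative `f ∈ L²(ℝ)`, `Δ > 0` and `σ² > 0`,
the autocovariances are absolutely summable, `∑_{h∈ℤ} |γ_f(hΔ)| < ∞`, if and only
if the periodization `F_Δ(u) = ∑_{j∈ℤ} f(u+jΔ)` belongs to `L²([0,Δ])`. -/
theorem statement4 (f : ℝ → ℝ) (hf_meas : Measurable f) (hf_nonneg : ∀ x, 0 ≤ f x)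
    (hf : MemLp f 2 volume) (Δ : ℝ) (hΔ : 0 < Δ) (σ2 : ℝ) (hσ2 : 0 < σ2) :
    Summable (fun h : ℤ => |autocov f σ2 ((h : ℝ) * Δ)|)
      ↔ (∫⁻ u in Set.Ioc (0 : ℝ) Δ,
          (∑' j : ℤ, ENNReal.ofReal (f (u + (j : ℝ) * Δ))) ^ 2) < ∞ := by
  have hF : Measurable fun x => ENNReal.ofReal (f x) := ENNReal.measurable_ofReal.comp hf_meas
  have hfinite : ∀ h : ℤ,
      ∫⁻ s, ENNReal.ofReal (f s) * ENNReal.ofReal (f (s + h * Δ)) ≠ ∞ := fun h =>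
    (hf.lintegral_ofReal_mul_lt_top
      (hf.comp_measurePreserving (measurePreserving_add_right volume _))).ne
  have habs : (fun h : ℤ => |autocov f σ2 (h * Δ)|) = fun h : ℤ =>
      σ2 * (∫⁻ s, ENNReal.ofReal (f s) * ENNReal.ofReal (f (s + h * Δ))).toReal := by
    ext h
    rw [autocov_eq_mul_toReal_lintegral hf_meas hf_nonneg, abs_of_nonneg (by positivity)]
  rw [habs, summable_mul_left_iff hσ2.ne', ENNReal.summable_toReal_iff hfinite,
    tsum_lintegral_mul_add_int_mul hΔ hF hF, lt_top_iff_ne_top]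
  simp_rw [sq, periodization]
end

section
/- Let Δ > 0 and let f ∈ L²(ℝ) ∩ L⁴(ℝ) be such that the function u ↦ Σ_{k∈ℤ} f(u + kΔ)² belongs to L²([0,Δ]). For r ∈ ℤ define G_r(u) = Σ_{k∈ℤ} |f(u + kΔ) f(u + (k+r)Δ)| for u ∈ [0,Δ]. Then for all p, q ∈ ℕ, Σ_{k∈ℤ} | ∫_ℝ f(u) f(u + pΔ) f(u + kΔ) f(u + (q+k)Δ) du | ≤ ∫_0^Δ G_p(u) G_q(u) du < ∞. -/
open MeasureTheory Set
open scoped ENNReal NNReal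

/-!
Bound each `|∫ F_k|` by `∫⁻ |F_k|`, fold `ℝ` onto the fundamental domain `(0, Δ]` of `ℤΔ` and
move both sums inside the integral over `(0, Δ]`. For fixed `u`, with `a_m = |f(u + mΔ)|`, the
double sum `∑_k ∑_j a_j a_{j+p} a_{j+k} a_{j+k+q}` factors as `G_p(u) G_q(u)` after shifting `k`
by `j`. Finiteness comes from `G_r(u) ≤ ∑_k f(u + kΔ)²`, which is `2ab ≤ a² + b²` summed along
the lattice.
-/

/-- `G_r(u) = ∑_{k∈ℤ} |f(u + kΔ) f(u + (k+r)Δ)|`, as a `[0,∞]`-valued function. -/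
noncomputable def Gabs (f : ℝ → ℝ) (Δ : ℝ) (r : ℤ) (u : ℝ) : ℝ≥0∞ :=
  ∑' k : ℤ, ENNReal.ofReal |f (u + (k : ℝ) * Δ) * f (u + ((k + r : ℤ) : ℝ) * Δ)|

namespace ENNReal

lemma two_mul_le_add_sq (a b : ℝ≥0∞) : 2 * a * b ≤ a ^ 2 + b ^ 2 := by
  rcases eq_or_ne a ∞ with rfl | ha
  · simp
  rcases eq_or_ne b ∞ with rfl | hb
  · simp
  lift a to ℝ≥0 using ha
  lift b to ℝ≥0 using hb
  exact_mod_cast _root_.two_mul_le_add_sq a b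

lemma tsum_mul_shift_le (a : ℤ → ℝ≥0∞) (r : ℤ) :
    ∑' k, a k * a (k + r) ≤ ∑' k, a k ^ 2 := by
  have hshift : ∑' k, a (k + r) ^ 2 = ∑' k, a k ^ 2 :=
    (Equiv.addRight r).tsum_eq fun k => a k ^ 2
  rw [← ENNReal.mul_le_mul_iff_right two_ne_zero ofNat_ne_top, ← ENNReal.tsum_mul_left, two_mul]
  calc ∑' k, 2 * (a k * a (k + r))
      ≤ ∑' k, (a k ^ 2 + a (k + r) ^ 2) :=
        ENNReal.tsum_le_tsum fun k => (mul_assoc 2 _ _).symm.trans_le (two_mul_le_add_sq _ _)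
    _ = ∑' k, a k ^ 2 + ∑' k, a k ^ 2 := by rw [ENNReal.tsum_add, hshift]

lemma tsum_tsum_mul_shift (a : ℤ → ℝ≥0∞) (p q : ℤ) :
    ∑' k, ∑' j, a j * a (j + p) * (a (j + k) * a (j + k + q))
      = (∑' j, a j * a (j + p)) * ∑' k, a k * a (k + q) := by
  rw [ENNReal.tsum_comm, ← ENNReal.tsum_mul_right]
  refine tsum_congr fun j => ?_
  rw [ENNReal.tsum_mul_left]
  congr 1
  exact (Equiv.addLeft j).tsum_eq fun k => a k * a (k + q)

end ENNReal

lemma MeasureTheory.tsum_lintegral_le_lintegral_tsum {α ι : Type*} [MeasurableSpace α]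
    {μ : Measure α} (f : ι → α → ℝ≥0∞) :
    ∑' i, ∫⁻ x, f i x ∂μ ≤ ∫⁻ x, ∑' i, f i x ∂μ := by
  classical
  rw [ENNReal.tsum_eq_iSup_sum]
  refine iSup_le fun s => ?_
  calc ∑ i ∈ s, ∫⁻ x, f i x ∂μ ≤ ∫⁻ x, ∑ i ∈ s, f i x ∂μ := by
        induction s using Finset.induction_on with
        | empty => simp
        | insert i s hi ih =>
          simp only [Finset.sum_insert hi]
          exact (add_le_add_right ih _).trans (le_lintegral_add _ _)
    _ ≤ ∫⁻ x, ∑' i, f i x ∂μ := lintegral_mono fun x => ENNReal.sum_le_tsum s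

lemma lintegral_eq_tsum_setLIntegral_Ioc_add (g : ℝ → ℝ≥0∞) {Δ : ℝ} (hΔ : 0 < Δ) :
    ∫⁻ u, g u = ∑' k : ℤ, ∫⁻ u in Ioc 0 Δ, g (u + k * Δ) := by
  have hshift (k : ℤ) : ∫⁻ u in Ioc 0 Δ, g (u + k * Δ) = ∫⁻ u in Ioc (k * Δ) (k * Δ + Δ), g u := by
    rw [← (measurePreserving_add_right volume (k * Δ)).setLIntegral_comp_preimage_emb
      (measurableEmbedding_addRight _) g, preimage_add_const_Ioc]
    simp
  have hcover : ⋃ k : ℤ, Ioc (k * Δ) (k * Δ + Δ) = univ := by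
    simpa only [zsmul_eq_mul, Int.cast_add, Int.cast_one, add_mul, one_mul] using
      iUnion_Ioc_zsmul hΔ
  have hdisj : Pairwise (Function.onFun Disjoint fun k : ℤ => Ioc (k * Δ) (k * Δ + Δ)) := by
    simpa only [zero_add, zsmul_eq_mul, Int.cast_add, Int.cast_one, add_mul, one_mul] using
      pairwise_disjoint_Ioc_add_zsmul (0 : ℝ) Δ
  simp_rw [hshift]
  rw [← lintegral_iUnion (fun _ => measurableSet_Ioc) hdisj, hcover, Measure.restrict_univ]

noncomputable def sampleENorm (f : ℝ → ℝ) (Δ u : ℝ) (k : ℤ) : ℝ≥0∞ := ‖f (u + k * Δ)‖ₑ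

lemma Gabs_eq_tsum_sampleENorm (f : ℝ → ℝ) (Δ : ℝ) (r : ℤ) (u : ℝ) :
    Gabs f Δ r u = ∑' k, sampleENorm f Δ u k * sampleENorm f Δ u (k + r) := by
  refine tsum_congr fun k => ?_
  rw [← Real.enorm_eq_ofReal_abs, enorm_mul, sampleENorm, sampleENorm]

lemma Gabs_le_tsum_sq (f : ℝ → ℝ) (Δ : ℝ) (r : ℤ) (u : ℝ) :
    Gabs f Δ r u ≤ ∑' k : ℤ, ENNReal.ofReal (f (u + k * Δ) ^ 2) := by
  have hsq (k : ℤ) : ENNReal.ofReal (f (u + k * Δ) ^ 2) = sampleENorm f Δ u k ^ 2 := by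
    rw [sampleENorm, Real.enorm_eq_ofReal_abs, ← ENNReal.ofReal_pow (abs_nonneg _), sq_abs]
  simp_rw [Gabs_eq_tsum_sampleENorm, hsq]
  exact ENNReal.tsum_mul_shift_le _ r

lemma enorm_shifted_product_eq_sampleENorm (f : ℝ → ℝ) (Δ u : ℝ) (p q k j : ℤ) :
    ‖f (u + j * Δ) * f (u + j * Δ + p * Δ) * f (u + j * Δ + k * Δ)
        * f (u + j * Δ + ((q + k : ℤ) : ℝ) * Δ)‖ₑ
      = sampleENorm f Δ u j * sampleENorm f Δ u (j + p)
        * (sampleENorm f Δ u (j + k) * sampleENorm f Δ u (j + k + q)) := by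
  simp only [enorm_mul, sampleENorm, ← mul_assoc]
  push_cast
  ring_nf

theorem tsum_abs_integral_le_lintegral_Gabs_mul (f : ℝ → ℝ) {Δ : ℝ} (hΔ : 0 < Δ) (p q : ℤ) :
    ∑' k : ℤ, ENNReal.ofReal
        |∫ u, f u * f (u + p * Δ) * f (u + k * Δ) * f (u + ((q + k : ℤ) : ℝ) * Δ)|
      ≤ ∫⁻ u in Ioc 0 Δ, Gabs f Δ p u * Gabs f Δ q u := by
  set F : ℤ → ℝ → ℝ := fun k u =>
    f u * f (u + p * Δ) * f (u + k * Δ) * f (u + ((q + k : ℤ) : ℝ) * Δ)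
  calc ∑' k, ENNReal.ofReal |∫ u, F k u|
      ≤ ∑' k, ∫⁻ u, ‖F k u‖ₑ := ENNReal.tsum_le_tsum fun k => by
        rw [← Real.enorm_eq_ofReal_abs]
        exact enorm_integral_le_lintegral_enorm _
    _ = ∑' k, ∑' j : ℤ, ∫⁻ u in Ioc 0 Δ, ‖F k (u + j * Δ)‖ₑ :=
        tsum_congr fun k => lintegral_eq_tsum_setLIntegral_Ioc_add _ hΔ
    _ ≤ ∑' k, ∫⁻ u in Ioc 0 Δ, ∑' j : ℤ, ‖F k (u + j * Δ)‖ₑ :=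
        ENNReal.tsum_le_tsum fun k => tsum_lintegral_le_lintegral_tsum _
    _ ≤ ∫⁻ u in Ioc 0 Δ, ∑' k, ∑' j : ℤ, ‖F k (u + j * Δ)‖ₑ :=
        tsum_lintegral_le_lintegral_tsum _
    _ = ∫⁻ u in Ioc 0 Δ, Gabs f Δ p u * Gabs f Δ q u := lintegral_congr fun u => by
        simp only [F, enorm_shifted_product_eq_sampleENorm, Gabs_eq_tsum_sampleENorm]
        exact ENNReal.tsum_tsum_mul_shift _ p q

theorem lintegral_Gabs_mul_lt_top (f : ℝ → ℝ) {Δ : ℝ} (p q : ℤ)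
    (hsq : ∫⁻ u in Ioc 0 Δ, (∑' k : ℤ, ENNReal.ofReal (f (u + k * Δ) ^ 2)) ^ 2 < ∞) :
    ∫⁻ u in Ioc 0 Δ, Gabs f Δ p u * Gabs f Δ q u < ∞ :=
  (lintegral_mono fun u => (mul_le_mul' (Gabs_le_tsum_sq f Δ p u)
    (Gabs_le_tsum_sq f Δ q u)).trans_eq (sq _).symm).trans_lt hsq

theorem statement5_general (f : ℝ → ℝ) (Δ : ℝ) (hΔ : 0 < Δ)
    (hsq : (∫⁻ u in Set.Ioc (0 : ℝ) Δ,
        (∑' k : ℤ, ENNReal.ofReal (f (u + (k : ℝ) * Δ) ^ 2)) ^ 2) < ∞) :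
    ∀ p q : ℕ,
      (∑' k : ℤ, ENNReal.ofReal
          |∫ u : ℝ, f u * f (u + (p : ℝ) * Δ) * f (u + (k : ℝ) * Δ)
              * f (u + (((q : ℤ) + k : ℤ) : ℝ) * Δ)|)
        ≤ ∫⁻ u in Set.Ioc (0 : ℝ) Δ, Gabs f Δ (p : ℤ) u * Gabs f Δ (q : ℤ) u
      ∧ (∫⁻ u in Set.Ioc (0 : ℝ) Δ, Gabs f Δ (p : ℤ) u * Gabs f Δ (q : ℤ) u) < ∞ := fun p q =>
  ⟨by exact_mod_cast tsum_abs_integral_le_lintegral_Gabs_mul f hΔ p q,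
    lintegral_Gabs_mul_lt_top f p q hsq⟩

/-- if `f ∈ L²(ℝ) ∩ L⁴(ℝ)` and `u ↦ ∑_{k∈ℤ} f(u+kΔ)²` is in `L²([0,Δ])`,
then for all `p, q ∈ ℕ`,
`∑_{k∈ℤ} |∫ f(u) f(u+pΔ) f(u+kΔ) f(u+(q+k)Δ) du| ≤ ∫₀^Δ G_p(u) G_q(u) du < ∞`. -/
theorem statement5 (f : ℝ → ℝ) (hf_meas : Measurable f)
    (hf2 : MemLp f 2 volume) (hf4 : MemLp f 4 volume) (Δ : ℝ) (hΔ : 0 < Δ)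
    (hsq : (∫⁻ u in Set.Ioc (0 : ℝ) Δ,
        (∑' k : ℤ, ENNReal.ofReal (f (u + (k : ℝ) * Δ) ^ 2)) ^ 2) < ∞) :
    ∀ p q : ℕ,
      (∑' k : ℤ, ENNReal.ofReal
          |∫ u : ℝ, f u * f (u + (p : ℝ) * Δ) * f (u + (k : ℝ) * Δ)
              * f (u + (((q : ℤ) + k : ℤ) : ℝ) * Δ)|)
        ≤ ∫⁻ u in Set.Ioc (0 : ℝ) Δ, Gabs f Δ (p : ℤ) u * Gabs f Δ (q : ℤ) u
      ∧ (∫⁻ u in Set.Ioc (0 : ℝ) Δ, Gabs f Δ (p : ℤ) u * Gabs f Δ (q : ℤ) u) < ∞ :=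
  statement5_general f Δ hΔ hsq
end

section
/- Let Δ > 0 and let f ∈ L²(ℝ) ∩ L⁴(ℝ) be such that the function u ↦ Σ_{k∈ℤ} f(u + kΔ)² belongs to L²([0,Δ]). For q ∈ ℤ define g_{q;Δ}(u) = Σ_{k∈ℤ} f(u + kΔ) f(u + (k+q)Δ) for u ∈ [0,Δ]. Then for all p, q ∈ ℕ the series Σ_{k∈ℤ} ∫_ℝ f(u) f(u + pΔ) f(u + kΔ) f(u + (q+k)Δ) du converges absolutely and equals ∫_0^Δ g_{p;Δ}(u) g_{q;Δ}(u) du. -/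
open MeasureTheory
open scoped ENNReal

/-- `g_{q;Δ}(u) = ∑_{k∈ℤ} f(u + kΔ) f(u + (k+q)Δ)`. -/
noncomputable def gper (f : ℝ → ℝ) (Δ : ℝ) (q : ℤ) (u : ℝ) : ℝ :=
  ∑' k : ℤ, f (u + (k : ℝ) * Δ) * f (u + ((k + q : ℤ) : ℝ) * Δ)

/-!
Cutting `ℝ` into the cells `(jΔ, (j+1)Δ]` and translating each of them back to `(0, Δ]` turns the
`k`-th integral into `∑_j ∫₀^Δ x_p(j) x_q(j+k)`, where `x_a(j)(u) = f(u+jΔ) f(u+(j+a)Δ)` are the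
terms of `g_{a;Δ}`. Substituting `m = j + k`, the double series over `k` and `j` becomes the series
over all pairs `(j, m)` of `∫₀^Δ x_p(j) x_q(m)`, which is `∫₀^Δ g_p g_q` by Fubini.
All interchanges rest on one bound: by AM–GM, `∑_j |x_a(j)(u)| ≤ 2 S(u)` with
`S(u) = ∑_k f(u+kΔ)²`, so the double series of absolute values is dominated by `4 S²`, which is
integrable on `(0, Δ]` by hypothesis.
-/

open Set

section Cells

variable {Δ : ℝ}

lemma iUnion_Ioc_intCast_mul (hΔ : 0 < Δ) :
    ⋃ j : ℤ, Ioc ((j : ℝ) * Δ) (j * Δ + Δ) = univ := by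
  simpa [zsmul_eq_mul, add_mul, add_assoc] using iUnion_Ioc_add_zsmul hΔ 0

lemma pairwise_disjoint_Ioc_intCast_mul (Δ : ℝ) :
    Pairwise (Function.onFun Disjoint fun j : ℤ => Ioc ((j : ℝ) * Δ) (j * Δ + Δ)) := by
  simpa [zsmul_eq_mul, add_mul, add_assoc] using pairwise_disjoint_Ioc_add_zsmul (0 : ℝ) Δ

lemma lintegral_eq_tsum_setLIntegral_Ioc (hΔ : 0 < Δ) (F : ℝ → ℝ≥0∞) :
    ∫⁻ x, F x = ∑' j : ℤ, ∫⁻ u in Ioc 0 Δ, F (u + j * Δ) := by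
  rw [← setLIntegral_univ, ← iUnion_Ioc_intCast_mul hΔ,
    lintegral_iUnion (fun _ => measurableSet_Ioc) (pairwise_disjoint_Ioc_intCast_mul Δ)]
  refine tsum_congr fun j => ?_
  rw [(measurePreserving_add_right volume _).setLIntegral_comp_emb (measurableEmbedding_addRight _),
    image_add_const_Ioc, zero_add, add_comm Δ]

lemma integral_eq_tsum_setIntegral_Ioc {E : Type*} [NormedAddCommGroup E] [NormedSpace ℝ E]
    (hΔ : 0 < Δ) {F : ℝ → E} (hF : Integrable F) :
    ∫ x, F x = ∑' j : ℤ, ∫ u in Ioc 0 Δ, F (u + j * Δ) := by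
  rw [← setIntegral_univ, ← iUnion_Ioc_intCast_mul hΔ,
    integral_iUnion (fun _ => measurableSet_Ioc) (pairwise_disjoint_Ioc_intCast_mul Δ)
      hF.integrableOn]
  refine tsum_congr fun j => ?_
  rw [← (measurePreserving_add_right volume _).setIntegral_image_emb
    (measurableEmbedding_addRight _), image_add_const_Ioc, zero_add, add_comm Δ]

end Cells

section Shear

variable {G : Type*} [AddGroup G]

lemma ENNReal.tsum_tsum_add_eq_tsum_prod (a : G × G → ℝ≥0∞) :
    ∑' k, ∑' j, a (j, j + k) = ∑' p, a p := by
  rw [ENNReal.tsum_comm, ENNReal.tsum_prod']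
  exact tsum_congr fun j => (Equiv.addLeft j).tsum_eq fun m => a (j, m)

lemma Summable.tsum_tsum_add_eq_tsum_prod {E : Type*} [NormedAddCommGroup E] [CompleteSpace E]
    {a : G × G → E} (ha : Summable a) :
    ∑' k, ∑' j, a (j, j + k) = ∑' p, a p := by
  let e : G × G ≃ G × G :=
    (Equiv.prodComm G G).trans (Equiv.prodShear (Equiv.refl G) Equiv.addLeft)
  rw [← e.tsum_eq]
  exact (e.summable_iff.mpr ha).tsum_prod.symm

end Shear

lemma summable_norm_integral_of_tsum_lintegral_ne_top {α ι E : Type*} [MeasurableSpace α]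
    {μ : Measure α} [NormedAddCommGroup E] [NormedSpace ℝ E] {F : ι → α → E}
    (h : ∑' i, ∫⁻ x, ‖F i x‖ₑ ∂μ ≠ ∞) : Summable fun i => ‖∫ x, F i x ∂μ‖ :=
  (ENNReal.summable_toReal h).of_nonneg_of_le (fun _ => norm_nonneg _) fun i =>
    (toReal_enorm _).symm.le.trans <|
      ENNReal.toReal_mono (ENNReal.ne_top_of_tsum_ne_top h i) (enorm_integral_le_lintegral_enorm _)

lemma enorm_mul_le_ofReal_sq_add_ofReal_sq (a b : ℝ) :
    ‖a * b‖ₑ ≤ ENNReal.ofReal (a ^ 2) + ENNReal.ofReal (b ^ 2) := by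
  rw [Real.enorm_eq_ofReal_abs, ← ENNReal.ofReal_add (sq_nonneg a) (sq_nonneg b)]
  refine ENNReal.ofReal_le_ofReal ?_
  rw [abs_mul]
  nlinarith [two_mul_le_add_sq |a| |b|, sq_abs a, sq_abs b, abs_nonneg a, abs_nonneg b]

noncomputable def gperTerm (f : ℝ → ℝ) (Δ : ℝ) (q k : ℤ) (u : ℝ) : ℝ :=
  f (u + (k : ℝ) * Δ) * f (u + ((k + q : ℤ) : ℝ) * Δ)

noncomputable def periodizedSq (f : ℝ → ℝ) (Δ : ℝ) (u : ℝ) : ℝ≥0∞ :=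
  ∑' k : ℤ, ENNReal.ofReal (f (u + (k : ℝ) * Δ) ^ 2)

noncomputable def quadProd (f : ℝ → ℝ) (Δ : ℝ) (p q k : ℤ) (u : ℝ) : ℝ :=
  f u * f (u + (p : ℝ) * Δ) * f (u + (k : ℝ) * Δ) * f (u + ((q + k : ℤ) : ℝ) * Δ)

lemma tsum_ofReal_sq_add_eq_periodizedSq (f : ℝ → ℝ) (Δ : ℝ) (a : ℤ) (u : ℝ) :
    ∑' k : ℤ, ENNReal.ofReal (f (u + ((k + a : ℤ) : ℝ) * Δ) ^ 2) = periodizedSq f Δ u :=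
  (Equiv.addRight a).tsum_eq fun k : ℤ => ENNReal.ofReal (f (u + (k : ℝ) * Δ) ^ 2)

lemma tsum_enorm_gperTerm_le (f : ℝ → ℝ) (Δ : ℝ) (q : ℤ) (u : ℝ) :
    ∑' k, ‖gperTerm f Δ q k u‖ₑ ≤ 2 * periodizedSq f Δ u :=
  calc ∑' k, ‖gperTerm f Δ q k u‖ₑ
      ≤ ∑' k : ℤ, (ENNReal.ofReal (f (u + (k : ℝ) * Δ) ^ 2)
          + ENNReal.ofReal (f (u + ((k + q : ℤ) : ℝ) * Δ) ^ 2)) :=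
        ENNReal.tsum_le_tsum fun _ => enorm_mul_le_ofReal_sq_add_ofReal_sq _ _
    _ = 2 * periodizedSq f Δ u := by
        rw [ENNReal.tsum_add, tsum_ofReal_sq_add_eq_periodizedSq, two_mul]
        rfl

lemma summable_norm_gperTerm {f : ℝ → ℝ} {Δ u : ℝ} (hu : periodizedSq f Δ u ≠ ∞) (q : ℤ) :
    Summable fun k => ‖gperTerm f Δ q k u‖ :=
  tsum_enorm_ne_top_iff_summable_norm.mp <| ne_top_of_le_ne_top
    (ENNReal.mul_ne_top ENNReal.ofNat_ne_top hu) (tsum_enorm_gperTerm_le f Δ q u)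

lemma gper_mul_gper_eq_tsum {f : ℝ → ℝ} {Δ u : ℝ} (hu : periodizedSq f Δ u ≠ ∞) (p q : ℤ) :
    gper f Δ p u * gper f Δ q u
      = ∑' km : ℤ × ℤ, gperTerm f Δ p km.1 u * gperTerm f Δ q km.2 u :=
  tsum_mul_tsum_of_summable_norm (summable_norm_gperTerm hu p) (summable_norm_gperTerm hu q)

lemma tsum_enorm_gperTerm_mul_le (f : ℝ → ℝ) (Δ : ℝ) (p q : ℤ) (u : ℝ) :
    ∑' km : ℤ × ℤ, ‖gperTerm f Δ p km.1 u * gperTerm f Δ q km.2 u‖ₑ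
      ≤ 2 * periodizedSq f Δ u * (2 * periodizedSq f Δ u) := by
  simp_rw [enorm_mul]
  rw [ENNReal.tsum_prod']
  simp_rw [ENNReal.tsum_mul_left, ENNReal.tsum_mul_right]
  exact mul_le_mul' (tsum_enorm_gperTerm_le f Δ p u) (tsum_enorm_gperTerm_le f Δ q u)

lemma measurable_gperTerm {f : ℝ → ℝ} (hf : Measurable f) (Δ : ℝ) (q k : ℤ) :
    Measurable (gperTerm f Δ q k) := by
  unfold gperTerm; fun_prop

lemma measurable_periodizedSq {f : ℝ → ℝ} (hf : Measurable f) (Δ : ℝ) :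
    Measurable (periodizedSq f Δ) := by
  unfold periodizedSq; fun_prop

lemma ae_periodizedSq_ne_top {f : ℝ → ℝ} {Δ : ℝ} (hf : Measurable f)
    (hsq : ∫⁻ u in Ioc 0 Δ, periodizedSq f Δ u ^ 2 < ∞) :
    ∀ᵐ u ∂volume.restrict (Ioc 0 Δ), periodizedSq f Δ u ≠ ∞ := by
  filter_upwards [ae_lt_top ((measurable_periodizedSq hf Δ).pow_const 2) hsq.ne] with u hu
  simpa using hu.ne

lemma tsum_setLIntegral_enorm_gperTerm_mul_ne_top {f : ℝ → ℝ} {Δ : ℝ} (hf : Measurable f)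
    (hsq : ∫⁻ u in Ioc 0 Δ, periodizedSq f Δ u ^ 2 < ∞) (p q : ℤ) :
    ∑' km : ℤ × ℤ, ∫⁻ u in Ioc 0 Δ, ‖gperTerm f Δ p km.1 u * gperTerm f Δ q km.2 u‖ₑ ≠ ∞ := by
  have hmeas (km : ℤ × ℤ) : AEMeasurable
      (fun u => ‖gperTerm f Δ p km.1 u * gperTerm f Δ q km.2 u‖ₑ) (volume.restrict (Ioc 0 Δ)) :=
    ((measurable_gperTerm hf Δ p km.1).mul (measurable_gperTerm hf Δ q km.2)).enorm.aemeasurable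
  rw [← lintegral_tsum hmeas]
  refine ne_top_of_le_ne_top ?_ (lintegral_mono fun u => tsum_enorm_gperTerm_mul_le f Δ p q u)
  have h_four_mul_sq (u : ℝ) :
      2 * periodizedSq f Δ u * (2 * periodizedSq f Δ u) = 4 * periodizedSq f Δ u ^ 2 := by
    ring
  simp only [h_four_mul_sq]
  rw [lintegral_const_mul' 4 _ (by norm_num)]
  exact ENNReal.mul_ne_top (by norm_num) hsq.ne

lemma quadProd_add_mul (f : ℝ → ℝ) (Δ : ℝ) (p q k j : ℤ) (u : ℝ) :
    quadProd f Δ p q k (u + j * Δ) = gperTerm f Δ p j u * gperTerm f Δ q (j + k) u := by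
  simp only [quadProd, gperTerm]
  push_cast
  ring_nf

section QuadProd

variable {f : ℝ → ℝ} {Δ : ℝ}

lemma lintegral_enorm_quadProd (hΔ : 0 < Δ) (p q k : ℤ) :
    ∫⁻ u, ‖quadProd f Δ p q k u‖ₑ
      = ∑' j : ℤ, ∫⁻ u in Ioc 0 Δ, ‖gperTerm f Δ p j u * gperTerm f Δ q (j + k) u‖ₑ := by
  simp only [lintegral_eq_tsum_setLIntegral_Ioc hΔ, quadProd_add_mul]

lemma integral_quadProd (hΔ : 0 < Δ) {p q k : ℤ} (hint : Integrable (quadProd f Δ p q k)) :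
    ∫ u, quadProd f Δ p q k u
      = ∑' j : ℤ, ∫ u in Ioc 0 Δ, gperTerm f Δ p j u * gperTerm f Δ q (j + k) u := by
  simp only [integral_eq_tsum_setIntegral_Ioc hΔ hint, quadProd_add_mul]

theorem summable_norm_integral_quadProd_and_tsum_eq (hf : Measurable f) (hΔ : 0 < Δ)
    (hsq : ∫⁻ u in Ioc 0 Δ, periodizedSq f Δ u ^ 2 < ∞) (p q : ℤ) :
    Summable (fun k => ‖∫ u, quadProd f Δ p q k u‖)
      ∧ ∑' k, ∫ u, quadProd f Δ p q k u = ∫ u in Ioc 0 Δ, gper f Δ p u * gper f Δ q u := by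
  have hT := tsum_setLIntegral_enorm_gperTerm_mul_ne_top hf hsq p q
  have hlint : ∑' k, ∫⁻ u, ‖quadProd f Δ p q k u‖ₑ ≠ ∞ := by
    simpa only [lintegral_enorm_quadProd hΔ, ENNReal.tsum_tsum_add_eq_tsum_prod
      (fun km : ℤ × ℤ => ∫⁻ u in Ioc 0 Δ, ‖gperTerm f Δ p km.1 u * gperTerm f Δ q km.2 u‖ₑ)]
      using hT
  have hint (k : ℤ) : Integrable (quadProd f Δ p q k) :=
    ⟨(by unfold quadProd; fun_prop : Measurable _).aestronglyMeasurable,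
      (ENNReal.ne_top_of_tsum_ne_top hlint k).lt_top⟩
  refine ⟨summable_norm_integral_of_tsum_lintegral_ne_top hlint, ?_⟩
  calc ∑' k, ∫ u, quadProd f Δ p q k u
      = ∑' k : ℤ, ∑' j : ℤ, ∫ u in Ioc 0 Δ, gperTerm f Δ p j u * gperTerm f Δ q (j + k) u :=
        tsum_congr fun k => integral_quadProd hΔ (hint k)
    _ = ∑' km : ℤ × ℤ, ∫ u in Ioc 0 Δ, gperTerm f Δ p km.1 u * gperTerm f Δ q km.2 u :=
        (summable_norm_integral_of_tsum_lintegral_ne_top hT).of_norm.tsum_tsum_add_eq_tsum_prod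
    _ = ∫ u in Ioc 0 Δ, ∑' km : ℤ × ℤ, gperTerm f Δ p km.1 u * gperTerm f Δ q km.2 u :=
        (integral_tsum (μ := volume.restrict (Ioc 0 Δ)) (fun km : ℤ × ℤ =>
          ((measurable_gperTerm hf Δ p km.1).mul
            (measurable_gperTerm hf Δ q km.2)).aestronglyMeasurable) hT).symm
    _ = ∫ u in Ioc 0 Δ, gper f Δ p u * gper f Δ q u :=
        integral_congr_ae <| (ae_periodizedSq_ne_top hf hsq).mono fun u hu =>
          (gper_mul_gper_eq_tsum hu p q).symm

end QuadProd

theorem statement6_general (f : ℝ → ℝ) (hf_meas : Measurable f) (Δ : ℝ) (hΔ : 0 < Δ)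
    (hsq : (∫⁻ u in Set.Ioc (0 : ℝ) Δ,
        (∑' k : ℤ, ENNReal.ofReal (f (u + (k : ℝ) * Δ) ^ 2)) ^ 2) < ∞) :
    ∀ p q : ℕ,
      Summable (fun k : ℤ =>
        |∫ u : ℝ, f u * f (u + (p : ℝ) * Δ) * f (u + (k : ℝ) * Δ)
            * f (u + (((q : ℤ) + k : ℤ) : ℝ) * Δ)|)
      ∧ (∑' k : ℤ, ∫ u : ℝ, f u * f (u + (p : ℝ) * Δ) * f (u + (k : ℝ) * Δ)
            * f (u + (((q : ℤ) + k : ℤ) : ℝ) * Δ))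
          = ∫ u in Set.Ioc (0 : ℝ) Δ, gper f Δ (p : ℤ) u * gper f Δ (q : ℤ) u := by
  intro p q
  simpa only [quadProd, Int.cast_natCast, Real.norm_eq_abs] using
    summable_norm_integral_quadProd_and_tsum_eq hf_meas hΔ hsq p q

/-- if `f ∈ L²(ℝ) ∩ L⁴(ℝ)` and `u ↦ ∑_{k∈ℤ} f(u+kΔ)²` is in `L²([0,Δ])`,
then for all `p, q ∈ ℕ` the series `∑_{k∈ℤ} ∫ f(u) f(u+pΔ) f(u+kΔ) f(u+(q+k)Δ) du`
converges absolutely and equals `∫₀^Δ g_{p;Δ}(u) g_{q;Δ}(u) du`. -/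
theorem statement6 (f : ℝ → ℝ) (hf_meas : Measurable f)
    (hf2 : MemLp f 2 volume) (hf4 : MemLp f 4 volume) (Δ : ℝ) (hΔ : 0 < Δ)
    (hsq : (∫⁻ u in Set.Ioc (0 : ℝ) Δ,
        (∑' k : ℤ, ENNReal.ofReal (f (u + (k : ℝ) * Δ) ^ 2)) ^ 2) < ∞) :
    ∀ p q : ℕ,
      Summable (fun k : ℤ =>
        |∫ u : ℝ, f u * f (u + (p : ℝ) * Δ) * f (u + (k : ℝ) * Δ)
            * f (u + (((q : ℤ) + k : ℤ) : ℝ) * Δ)|)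
      ∧ (∑' k : ℤ, ∫ u : ℝ, f u * f (u + (p : ℝ) * Δ) * f (u + (k : ℝ) * Δ)
            * f (u + (((q : ℤ) + k : ℤ) : ℝ) * Δ))
          = ∫ u in Set.Ioc (0 : ℝ) Δ, gper f Δ (p : ℤ) u * gper f Δ (q : ℤ) u :=
  statement6_general f hf_meas Δ hΔ hsq
end

section
/- Let 1/2 < H ≤ 3/4 and define f(s) = Σ_{i≥1} i^{-H} 1_{(i,i+1]}(s). Then the function u ↦ Σ_{k∈ℤ} f(u+k)² belongs to L²([0,1]), but the autocovariances γ(h) = ∫_ℝ f(s) f(s + h) ds, h ∈ ℤ, satisfy Σ_{h∈ℤ} γ(h)² = ∞. -/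
/-!
On `(0, 1]` the integer translates `u + k` meet each step `(i, i + 1]` of `f` exactly once, so the
periodized square `∑ₖ f(u + k)²` is almost everywhere the constant `∑ᵢ i^{-2H}`.

On the other hand `s^{-H} ≤ f(s) ≤ 2^H s^{-H}` for `s > 1`. The upper bound puts `f` in `L²(ℝ)`,
so that `γ` is an absolutely convergent integral, and the lower bound, integrated over `(1, 1 + h]`,
gives `γ(h) ≥ 6^{-H} h^{1-2H}`. Hence `γ(h)² ≳ h^{2-4H}` with `2 - 4H ≥ -1`, which is not summable.
-/

open MeasureTheory
open scoped ENNReal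

/-- The kernel `f(s) = ∑_{i≥1} i^{-H} 1_{(i,i+1]}(s)` (indexing `i = k+1`, `k ∈ ℕ`). -/
noncomputable def powKernel (H : ℝ) (s : ℝ) : ℝ :=
  ∑' k : ℕ, Set.indicator (Set.Ioc ((k : ℝ) + 1) ((k : ℝ) + 2))
    (fun _ => ((k : ℝ) + 1) ^ (-H)) s

open Set Real

lemma powKernel_eq_of_mem_Ioc (H : ℝ) {s : ℝ} {j : ℕ}
    (hs : s ∈ Ioc ((j : ℝ) + 1) ((j : ℝ) + 2)) : powKernel H s = ((j : ℝ) + 1) ^ (-H) := by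
  refine (tsum_eq_single j fun k hk => indicator_of_notMem (fun hks => hk ?_) _).trans
    (indicator_of_mem hs _)
  have hkj : (k : ℝ) < j + 1 := by linarith [hs.2, hks.1]
  have hjk : (j : ℝ) < k + 1 := by linarith [hs.1, hks.2]
  exact_mod_cast le_antisymm (Nat.lt_succ_iff.1 (by exact_mod_cast hkj))
    (Nat.lt_succ_iff.1 (by exact_mod_cast hjk))

lemma powKernel_eq_zero_of_le_one (H : ℝ) {s : ℝ} (hs : s ≤ 1) : powKernel H s = 0 :=
  (tsum_congr fun k => indicator_of_notMem
    (fun hks => by linarith [hks.1, (Nat.cast_nonneg k : (0 : ℝ) ≤ k)]) _).trans tsum_zero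

lemma powKernel_eq_natCeil (H : ℝ) {s : ℝ} (hs : 1 < s) :
    powKernel H s = ((⌈s⌉₊ : ℝ) - 1) ^ (-H) := by
  have h2 : 2 ≤ ⌈s⌉₊ := Nat.lt_ceil.2 (by exact_mod_cast hs)
  have hcast : ((⌈s⌉₊ - 2 : ℕ) : ℝ) = ⌈s⌉₊ - 2 := by rw [Nat.cast_sub h2]; norm_num
  rw [powKernel_eq_of_mem_Ioc H (j := ⌈s⌉₊ - 2), hcast]
  · ring_nf
  · rw [hcast]
    exact ⟨by linarith [Nat.ceil_lt_add_one (by linarith : (0 : ℝ) ≤ s)],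
      by linarith [Nat.le_ceil s]⟩

lemma powKernel_eq_indicator (H : ℝ) :
    powKernel H = (Ioi 1).indicator fun s => ((⌈s⌉₊ : ℝ) - 1) ^ (-H) := by
  funext s
  by_cases hs : s ∈ Ioi 1
  · rw [indicator_of_mem hs, powKernel_eq_natCeil H hs]
  · rw [indicator_of_notMem hs, powKernel_eq_zero_of_le_one H (not_lt.1 hs)]

lemma measurable_powKernel (H : ℝ) : Measurable (powKernel H) := by
  rw [powKernel_eq_indicator]
  exact ((measurable_from_top (f := fun n : ℕ => ((n : ℝ) - 1) ^ (-H))).comp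
    Nat.measurable_ceil).indicator measurableSet_Ioi

lemma powKernel_nonneg (H s : ℝ) : 0 ≤ powKernel H s :=
  tsum_nonneg fun _ => indicator_nonneg (fun _ _ => by positivity) s

lemma tsum_powKernel_add_int_sq (H : ℝ) {u : ℝ} (hu : u ∈ Ioc 0 1) :
    ∑' k : ℤ, powKernel H (u + k) ^ 2 = ∑' n : ℕ, (((n : ℝ) + 1) ^ (-H)) ^ 2 := by
  have hinj : Function.Injective fun n : ℕ => (n : ℤ) + 1 := fun a b h => by simpa using h
  have hsupp : Function.support (fun k : ℤ => powKernel H (u + k) ^ 2) ⊆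
      range fun n : ℕ => (n : ℤ) + 1 := by
    intro k hk
    have hk1 : 1 < u + k := by
      by_contra h
      exact hk (by simp [powKernel_eq_zero_of_le_one H (not_lt.1 h)])
    have hk0 : (0 : ℝ) < k := by linarith [hu.2]
    have : 0 < k := by exact_mod_cast hk0
    exact ⟨(k - 1).toNat, by dsimp only; omega⟩
  rw [← hinj.tsum_eq hsupp]
  refine tsum_congr fun n => ?_
  rw [powKernel_eq_of_mem_Ioc H (j := n)
    ⟨by push_cast; linarith [hu.1], by push_cast; linarith [hu.2]⟩]

section Bounds

variable {H s : ℝ}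

lemma one_le_natCeil_sub_one (hs : 1 < s) : (1 : ℝ) ≤ ⌈s⌉₊ - 1 := by
  have : 2 ≤ ⌈s⌉₊ := Nat.lt_ceil.2 (by exact_mod_cast hs)
  have : (2 : ℝ) ≤ ⌈s⌉₊ := by exact_mod_cast this
  linarith

lemma rpow_neg_le_powKernel (hH : 0 ≤ H) (hs : 1 < s) : s ^ (-H) ≤ powKernel H s := by
  rw [powKernel_eq_natCeil H hs]
  exact rpow_le_rpow_of_nonpos (by linarith [one_le_natCeil_sub_one hs])
    (by linarith [Nat.ceil_lt_add_one (by linarith : (0 : ℝ) ≤ s)]) (by linarith)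

lemma powKernel_le (hH : 0 ≤ H) (hs : 1 < s) : powKernel H s ≤ 2 ^ H * s ^ (-H) := by
  rw [powKernel_eq_natCeil H hs]
  have hhalf : s / 2 ≤ (⌈s⌉₊ : ℝ) - 1 := by linarith [one_le_natCeil_sub_one hs, Nat.le_ceil s]
  calc ((⌈s⌉₊ : ℝ) - 1) ^ (-H) ≤ (s / 2) ^ (-H) :=
        rpow_le_rpow_of_nonpos (by linarith) hhalf (by linarith)
    _ = 2 ^ H * s ^ (-H) := by
        rw [div_rpow (by linarith) zero_le_two, rpow_neg zero_le_two, div_inv_eq_mul, mul_comm]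

end Bounds

lemma memLp_powKernel {H : ℝ} (hH : 1 / 2 < H) : MemLp (powKernel H) 2 := by
  have hmeas := (measurable_powKernel H).aestronglyMeasurable (μ := volume)
  rw [memLp_two_iff_integrable_sq hmeas]
  have hdom : Integrable ((Ioi 1).indicator fun s : ℝ => 2 ^ (2 * H) * s ^ (-(2 * H))) := by
    rw [integrable_indicator_iff measurableSet_Ioi]
    exact (integrableOn_Ioi_rpow_of_lt (by linarith) one_pos).const_mul _
  refine hdom.mono' (hmeas.pow 2) (Filter.Eventually.of_forall fun s => ?_)
  rw [norm_of_nonneg (by positivity)]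
  by_cases hs : s ∈ Ioi 1
  · rw [indicator_of_mem hs]
    calc powKernel H s ^ 2 ≤ (2 ^ H * s ^ (-H)) ^ 2 :=
          pow_le_pow_left₀ (powKernel_nonneg H s) (powKernel_le (by linarith) hs) 2
      _ = 2 ^ (2 * H) * s ^ (-(2 * H)) := by
          rw [mul_pow, ← rpow_mul_natCast zero_le_two,
            ← rpow_mul_natCast (zero_lt_one.trans hs).le]
          ring_nf
  · rw [indicator_of_notMem hs, powKernel_eq_zero_of_le_one H (not_lt.1 hs)]
    norm_num

noncomputable def powKernelAutocov (H t : ℝ) : ℝ :=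
  ∫ s, powKernel H s * powKernel H (s + t)

lemma integrable_powKernel_mul_shift {H : ℝ} (hH : 1 / 2 < H) (t : ℝ) :
    Integrable fun s => powKernel H s * powKernel H (s + t) :=
  (memLp_powKernel hH).integrable_mul
    ((memLp_powKernel hH).comp_measurePreserving (measurePreserving_add_right volume t))

lemma le_powKernelAutocov {H t : ℝ} (hH : 1 / 2 < H) (ht : 1 ≤ t) :
    6 ^ (-H) * t ^ (1 - 2 * H) ≤ powKernelAutocov H t := by
  have hbound : ∀ s ∈ Ioc 1 (1 + t),
      (2 * t) ^ (-H) * (3 * t) ^ (-H) ≤ powKernel H s * powKernel H (s + t) := fun s hs =>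
    mul_le_mul
      ((rpow_le_rpow_of_nonpos (by linarith [hs.1]) (by linarith [hs.2]) (by linarith)).trans
        (rpow_neg_le_powKernel (by linarith) hs.1))
      ((rpow_le_rpow_of_nonpos (by linarith [hs.1]) (by linarith [hs.2]) (by linarith)).trans
        (rpow_neg_le_powKernel (by linarith) (by linarith [hs.1])))
      (by positivity) (powKernel_nonneg H s)
  have hvol : volume.real (Ioc (1 : ℝ) (1 + t)) = t := by
    rw [Real.volume_real_Ioc_of_le (by linarith)]
    ring
  calc 6 ^ (-H) * t ^ (1 - 2 * H)
        = (2 * t) ^ (-H) * (3 * t) ^ (-H) * volume.real (Ioc (1 : ℝ) (1 + t)) := by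
        rw [hvol, mul_rpow zero_le_two (by linarith), mul_rpow zero_le_three (by linarith),
          show (6 : ℝ) = 2 * 3 by norm_num, mul_rpow zero_le_two zero_le_three, sub_eq_add_neg,
          rpow_add (by linarith), rpow_one, show -(2 * H) = -H + -H by ring,
          rpow_add (by linarith)]
        ring
    _ ≤ ∫ s in Ioc 1 (1 + t), powKernel H s * powKernel H (s + t) :=
        setIntegral_ge_of_const_le_real measurableSet_Ioc measure_Ioc_lt_top.ne hbound
          (integrable_powKernel_mul_shift hH t).integrableOn
    _ ≤ powKernelAutocov H t :=
        setIntegral_le_integral (integrable_powKernel_mul_shift hH t)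
          (Filter.Eventually.of_forall fun s =>
            mul_nonneg (powKernel_nonneg H s) (powKernel_nonneg H _))

lemma not_summable_powKernelAutocov_sq {H : ℝ} (hH1 : 1 / 2 < H) (hH2 : H ≤ 3 / 4) :
    ¬ Summable fun n : ℕ => powKernelAutocov H n ^ 2 := by
  intro hsum
  have hp : ¬ Summable fun n : ℕ => (6 ^ (-H)) ^ 2 * (n : ℝ) ^ (2 - 4 * H) := by
    rw [summable_mul_left_iff (by positivity), summable_nat_rpow]
    linarith
  refine hp ((summable_nat_add_iff 1).1 (((summable_nat_add_iff 1).2 hsum).of_nonneg_of_le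
    (fun _ => by positivity) fun n => ?_))
  have hn : (1 : ℝ) ≤ (n + 1 : ℕ) := by simp
  calc (6 ^ (-H)) ^ 2 * ((n + 1 : ℕ) : ℝ) ^ (2 - 4 * H)
      = (6 ^ (-H) * ((n + 1 : ℕ) : ℝ) ^ (1 - 2 * H)) ^ 2 := by
        rw [mul_pow, ← rpow_mul_natCast (Nat.cast_nonneg (n + 1))]
        ring_nf
    _ ≤ powKernelAutocov H (n + 1 : ℕ) ^ 2 :=
        pow_le_pow_left₀ (by positivity) (le_powKernelAutocov hH1 hn) 2

/-- for `1/2 < H ≤ 3/4` and `f(s) = ∑_{i≥1} i^{-H} 1_{(i,i+1]}(s)`,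
the periodized square `u ↦ ∑_{k∈ℤ} f(u+k)²` belongs to `L²([0,1])`, but
`∑_{h∈ℤ} γ(h)² = ∞`, where `γ(h) = ∫ f(s) f(s+h) ds`. -/
theorem statement7 (H : ℝ) (hH1 : 1 / 2 < H) (hH2 : H ≤ 3 / 4) :
    MemLp (fun u : ℝ => ∑' k : ℤ, powKernel H (u + (k : ℝ)) ^ 2) 2
        (volume.restrict (Set.Icc (0 : ℝ) 1))
    ∧ ¬ Summable (fun h : ℤ =>
        (∫ s : ℝ, powKernel H s * powKernel H (s + (h : ℝ))) ^ 2) := by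
  constructor
  · refine (memLp_const (∑' n : ℕ, (((n : ℝ) + 1) ^ (-H)) ^ 2)).ae_eq ?_
    rw [← Measure.restrict_congr_set Ioc_ae_eq_Icc]
    filter_upwards [ae_restrict_mem measurableSet_Ioc] with u hu
    exact (tsum_powKernel_add_int_sq H hu).symm
  · intro hsum
    refine not_summable_powKernelAutocov_sq hH1 hH2 ?_
    simpa [Function.comp_def, powKernelAutocov] using hsum.comp_injective Nat.cast_injective
end

section
/- Let Δ > 0, let (ψ_i)_{i∈ℤ} be a square-summable real sequence that is not identically zero, and let f = Σ_{i∈ℤ} ψ_i 1_{(iΔ,(i+1)Δ]}. Then for every p ∈ ℕ and almost every u ∈ [0,Δ], g_{p;Δ}(u) = Σ_{k∈ℤ} ψ_k ψ_{k+p}, and g_{p;Δ}(u) = ρ(pΔ) g_{0;Δ}(u), where ρ(pΔ) = γ_f(pΔ)/γ_f(0). In particular, ∫_0^Δ ( g_{i;Δ}(u) − ρ(iΔ) g_{0;Δ}(u) ) ( g_{j;Δ}(u) − ρ(jΔ) g_{0;Δ}(u) ) du = 0 for all i, j ∈ ℕ. -/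
/-!
For `u ∈ (0, Δ]` every point `u + kΔ` lies in the `k`-th step of `f`, so `g_{q;Δ}` is the
constant `∑ₖ ψₖ ψₖ₊q` there. Likewise `s ↦ f(s) f(s + qΔ)` is again a step kernel, with steps
`ψᵢ ψᵢ₊q`, whence `γ_f(qΔ) = σ² Δ ∑ᵢ ψᵢ ψᵢ₊q`. So `ρ(qΔ) g_{0;Δ} = g_{q;Δ}` on `(0, Δ]`, and the
integrand of the correction term vanishes identically there.
-/

open MeasureTheory
open scoped ENNReal

/-- The piecewise constant kernel `f = ∑_{i∈ℤ} ψ_i 1_{(iΔ,(i+1)Δ]}`. -/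
noncomputable def stepKernel (ψ : ℤ → ℝ) (Δ : ℝ) (u : ℝ) : ℝ :=
  ∑' i : ℤ, Set.indicator (Set.Ioc ((i : ℝ) * Δ) (((i : ℝ) + 1) * Δ)) (fun _ => ψ i) u

open Set

section StepKernel

variable {ψ φ : ℤ → ℝ} {Δ : ℝ}

lemma existsUnique_mem_Ioc_intCast_mul (hΔ : 0 < Δ) (u : ℝ) :
    ∃! i : ℤ, u ∈ Ioc ((i : ℝ) * Δ) (((i : ℝ) + 1) * Δ) := by
  have hmem (i : ℤ) : u ∈ Ioc ((i : ℝ) * Δ) (((i : ℝ) + 1) * Δ) ↔ u - i • Δ ∈ Ioc 0 (0 + Δ) := by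
    simp only [mem_Ioc, zsmul_eq_mul, zero_add, add_mul, one_mul, sub_pos, sub_le_iff_le_add']
  simpa only [hmem] using existsUnique_sub_zsmul_mem_Ioc hΔ u 0

lemma stepKernel_eq_of_mem (hΔ : 0 < Δ) {i : ℤ} {u : ℝ}
    (hu : u ∈ Ioc ((i : ℝ) * Δ) (((i : ℝ) + 1) * Δ)) : stepKernel ψ Δ u = ψ i := by
  rw [stepKernel, tsum_eq_single i, indicator_of_mem hu]
  exact fun j hj => indicator_of_notMem
    (fun hj' => hj ((existsUnique_mem_Ioc_intCast_mul hΔ u).unique hj' hu)) _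

lemma add_intCast_mul_mem_Ioc {u : ℝ} (hu : u ∈ Ioc 0 Δ) (k : ℤ) :
    u + (k : ℝ) * Δ ∈ Ioc ((k : ℝ) * Δ) (((k : ℝ) + 1) * Δ) :=
  ⟨by linarith [hu.1], by linarith [hu.2]⟩

lemma gper_stepKernel (hΔ : 0 < Δ) (q : ℤ) {u : ℝ} (hu : u ∈ Ioc 0 Δ) :
    gper (stepKernel ψ Δ) Δ q u = ∑' k : ℤ, ψ k * ψ (k + q) := by
  refine tsum_congr fun k => ?_
  rw [stepKernel_eq_of_mem hΔ (add_intCast_mul_mem_Ioc hu k),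
    stepKernel_eq_of_mem hΔ (add_intCast_mul_mem_Ioc hu (k + q))]

lemma integral_stepKernel (hΔ : 0 < Δ) (hφ : Summable φ) :
    ∫ u, stepKernel φ Δ u = (∑' i, φ i) * Δ := by
  have hvol (i : ℤ) : volume.real (Ioc ((i : ℝ) * Δ) (((i : ℝ) + 1) * Δ)) = Δ := by
    rw [Real.volume_real_Ioc_of_le (by linarith)]
    ring
  have hint (i : ℤ) : Integrable
      ((Ioc ((i : ℝ) * Δ) (((i : ℝ) + 1) * Δ)).indicator fun _ => φ i) :=
    (integrable_indicator_iff measurableSet_Ioc).2 (integrableOn_const measure_Ioc_lt_top.ne)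
  have hnorm (i : ℤ) :
      ∫ u, ‖(Ioc ((i : ℝ) * Δ) (((i : ℝ) + 1) * Δ)).indicator (fun _ => φ i) u‖ = |φ i| * Δ := by
    simp_rw [norm_indicator_eq_indicator_norm]
    rw [integral_indicator_const _ measurableSet_Ioc, hvol, smul_eq_mul, mul_comm,
      Real.norm_eq_abs]
  unfold stepKernel
  rw [← integral_tsum_of_summable_integral_norm hint
    (by simpa only [hnorm] using hφ.abs.mul_right Δ), ← tsum_mul_right]
  refine tsum_congr fun i => ?_
  rw [integral_indicator_const _ measurableSet_Ioc, hvol, smul_eq_mul, mul_comm]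

lemma summable_mul_shift (hψ : Summable fun i : ℤ => ψ i ^ 2) (q : ℤ) :
    Summable fun i : ℤ => ψ i * ψ (i + q) :=
  (hψ.add (hψ.comp_injective (add_left_injective q))).of_norm_bounded fun i => by
    change |ψ i * ψ (i + q)| ≤ ψ i ^ 2 + ψ (i + q) ^ 2
    rw [abs_mul]
    nlinarith [two_mul_le_add_sq |ψ i| |ψ (i + q)|, sq_abs (ψ i), sq_abs (ψ (i + q)),
      abs_nonneg (ψ i), abs_nonneg (ψ (i + q))]

lemma stepKernel_mul_stepKernel_add (hΔ : 0 < Δ) (q : ℤ) (s : ℝ) :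
    stepKernel ψ Δ s * stepKernel ψ Δ (s + q * Δ)
      = stepKernel (fun i => ψ i * ψ (i + q)) Δ s := by
  obtain ⟨i, hi, -⟩ := existsUnique_mem_Ioc_intCast_mul hΔ s
  have hshift : s + q * Δ ∈ Ioc (((i + q : ℤ) : ℝ) * Δ) ((((i + q : ℤ) : ℝ) + 1) * Δ) := by
    push_cast
    exact ⟨by linarith [hi.1], by linarith [hi.2]⟩
  rw [stepKernel_eq_of_mem hΔ hi, stepKernel_eq_of_mem hΔ hshift, stepKernel_eq_of_mem hΔ hi]

lemma autocov_stepKernel (hΔ : 0 < Δ) (hψ : Summable fun i : ℤ => ψ i ^ 2) (σ2 : ℝ) (q : ℤ) :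
    autocov (stepKernel ψ Δ) σ2 (q * Δ) = σ2 * ((∑' i, ψ i * ψ (i + q)) * Δ) := by
  rw [autocov, ← integral_stepKernel hΔ (summable_mul_shift hψ q), ← integral_neg_eq_self]
  simp_rw [← stepKernel_mul_stepKernel_add hΔ, neg_neg, sub_neg_eq_add, add_comm]

lemma gper_stepKernel_eq_autocov_ratio_mul {σ2 : ℝ} (hΔ : 0 < Δ) (hσ2 : σ2 ≠ 0)
    (hψ : Summable fun i : ℤ => ψ i ^ 2) (hne : ∃ i, ψ i ≠ 0) (q : ℤ) {u : ℝ} (hu : u ∈ Ioc 0 Δ) :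
    gper (stepKernel ψ Δ) Δ q u
      = (autocov (stepKernel ψ Δ) σ2 (q * Δ) / autocov (stepKernel ψ Δ) σ2 0)
          * gper (stepKernel ψ Δ) Δ 0 u := by
  obtain ⟨i, hi⟩ := hne
  have hS0 : 0 < ∑' k, ψ k * ψ (k + 0) := by
    simp_rw [add_zero, ← sq]
    exact hψ.tsum_pos (fun _ => sq_nonneg _) i (by positivity)
  have h0 := autocov_stepKernel hΔ hψ σ2 0
  rw [Int.cast_zero, zero_mul] at h0
  rw [gper_stepKernel hΔ q hu, gper_stepKernel hΔ 0 hu, autocov_stepKernel hΔ hψ σ2 q, h0]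
  field_simp

end StepKernel

/-- for a square-summable, not identically zero sequence `(ψ_i)` and
`f = ∑_{i∈ℤ} ψ_i 1_{(iΔ,(i+1)Δ]}`, for every `p ∈ ℕ` and almost every `u ∈ [0,Δ]` one has
`g_{p;Δ}(u) = ∑_{k∈ℤ} ψ_k ψ_{k+p}` and `g_{p;Δ}(u) = ρ(pΔ) g_{0;Δ}(u)`; in particular the
correction term `∫₀^Δ (g_{i;Δ} − ρ(iΔ) g_{0;Δ})(g_{j;Δ} − ρ(jΔ) g_{0;Δ}) du` vanishes. -/
theorem statement9 (Δ : ℝ) (hΔ : 0 < Δ) (σ2 : ℝ) (hσ2 : 0 < σ2)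
    (ψ : ℤ → ℝ) (hψ : Summable (fun i : ℤ => ψ i ^ 2)) (hne : ∃ i : ℤ, ψ i ≠ 0) :
    (∀ p : ℕ, ∀ᵐ u ∂(volume.restrict (Set.Icc (0 : ℝ) Δ)),
        gper (stepKernel ψ Δ) Δ (p : ℤ) u = (∑' k : ℤ, ψ k * ψ (k + (p : ℤ)))
        ∧ gper (stepKernel ψ Δ) Δ (p : ℤ) u
            = (autocov (stepKernel ψ Δ) σ2 ((p : ℝ) * Δ)
                  / autocov (stepKernel ψ Δ) σ2 0)
                * gper (stepKernel ψ Δ) Δ 0 u)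
    ∧ ∀ i j : ℕ,
        (∫ u in Set.Ioc (0 : ℝ) Δ,
          (gper (stepKernel ψ Δ) Δ (i : ℤ) u
              - (autocov (stepKernel ψ Δ) σ2 ((i : ℝ) * Δ)
                    / autocov (stepKernel ψ Δ) σ2 0)
                  * gper (stepKernel ψ Δ) Δ 0 u)
          * (gper (stepKernel ψ Δ) Δ (j : ℤ) u
              - (autocov (stepKernel ψ Δ) σ2 ((j : ℝ) * Δ)
                    / autocov (stepKernel ψ Δ) σ2 0)
                  * gper (stepKernel ψ Δ) Δ 0 u)) = 0 := by
  have hratio (p : ℕ) {u : ℝ} (hu : u ∈ Ioc 0 Δ) :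
      gper (stepKernel ψ Δ) Δ p u
        = (autocov (stepKernel ψ Δ) σ2 (p * Δ) / autocov (stepKernel ψ Δ) σ2 0)
            * gper (stepKernel ψ Δ) Δ 0 u := by
    simpa only [Int.cast_natCast] using
      gper_stepKernel_eq_autocov_ratio_mul hΔ hσ2.ne' hψ hne p hu
  refine ⟨fun p => ?_, fun i j => ?_⟩
  · rw [Measure.restrict_congr_set Ioc_ae_eq_Icc.symm]
    exact ae_restrict_of_forall_mem measurableSet_Ioc fun u hu =>
      ⟨gper_stepKernel hΔ p hu, hratio p hu⟩
  · refine setIntegral_eq_zero_of_forall_eq_zero fun u hu => ?_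
    rw [sub_eq_zero_of_eq (hratio i hu), zero_mul]
end

section
/- Let d ∈ (0, 1/2) and define the fractional kernel f_d(s) = (s_+^d − (s−1)_+^d)/Γ(d+1). Then there exists a constant C(d) > 0 such that for every h ∈ ℝ, ∫_ℝ f_d(s) f_d(s + h) ds = (C(d)/2) ( |h+1|^{2d+1} − 2|h|^{2d+1} + |h−1|^{2d+1} ). In particular C(d) = ∫_ℝ f_d(s)² ds. -/
/-!
Write `f_d = F₁ / Γ(d+1)` with `F_t(s) = s₊^d − (s−t)₊^d`. The family `t ↦ F_t ∈ L²(ℝ)` has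
stationary increments (`F_t − F_u` is a translate of `F_{t−u}`) and is self-similar
(`F_t(t·) = t^d F₁`), so `‖F_t‖² = |t|^{2d+1} ‖F₁‖²`; the norm is finite because `F_t(s)` decays
like `s^{d−1}` and `d < 1/2`. Since `F₁(· + h) = F_{1−h} − F_{−h}`, polarization expresses
`∫ F₁(s) F₁(s+h) ds` through `‖F_{1±h}‖²` and `‖F_h‖²`.
-/

open MeasureTheory Real
open scoped ENNReal

/-- The kernel `f_d(s) = (s₊^d − (s−1)₊^d)/Γ(d+1)` of fractional Lévy noise with
increment length 1. -/
noncomputable def fracKernel (d : ℝ) (s : ℝ) : ℝ :=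
  (max s 0 ^ d - max (s - 1) 0 ^ d) / Real.Gamma (d + 1)

section Polarization

variable {α : Type*} [MeasurableSpace α] {μ : Measure α}

theorem integral_mul_eq_of_memLp_two {f g : α → ℝ} (hf : MemLp f 2 μ) (hg : MemLp g 2 μ) :
    ∫ x, f x * g x ∂μ
      = ((∫ x, f x ^ 2 ∂μ) + (∫ x, g x ^ 2 ∂μ) - ∫ x, (f x - g x) ^ 2 ∂μ) / 2 := by
  have hfg : Integrable (fun x => 2 * (f x * g x)) μ := (hf.integrable_mul hg).const_mul 2
  have hsq : ∫ x, (f x - g x) ^ 2 ∂μ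
      = (∫ x, f x ^ 2 ∂μ) + (∫ x, g x ^ 2 ∂μ) - 2 * ∫ x, f x * g x ∂μ := by
    simp_rw [sub_sq', mul_assoc]
    have hsum : Integrable (fun x => f x ^ 2 + g x ^ 2) μ := hf.integrable_sq.add hg.integrable_sq
    rw [integral_sub hsum hfg,
      integral_add hf.integrable_sq hg.integrable_sq, integral_const_mul]
  linarith

end Polarization

/-- The Mandelbrot–Van Ness kernel of the increment over `[0, t]`. -/
noncomputable def incrKernel (d t s : ℝ) : ℝ := max s 0 ^ d - max (s - t) 0 ^ d

section IncrKernel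

variable {d t : ℝ}

theorem fracKernel_eq_incrKernel (d s : ℝ) :
    fracKernel d s = incrKernel d 1 s / Real.Gamma (d + 1) := rfl

@[simp]
theorem incrKernel_zero_left (d s : ℝ) : incrKernel d 0 s = 0 := by
  simp [incrKernel]

theorem incrKernel_sub_incrKernel (d t u s : ℝ) :
    incrKernel d t s - incrKernel d u s = incrKernel d (t - u) (s - u) := by
  rw [incrKernel, incrKernel, incrKernel, sub_sub_sub_cancel_right]
  ring

theorem incrKernel_neg (d t s : ℝ) : incrKernel d (-t) s = -incrKernel d t (s + t) := by
  simpa using (incrKernel_sub_incrKernel d 0 t (s + t)).symm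

theorem incrKernel_of_nonpos (ht : 0 ≤ t) {s : ℝ} (hs : s ≤ 0) : incrKernel d t s = 0 := by
  rw [incrKernel, max_eq_right hs, max_eq_right (by linarith), sub_self]

theorem incrKernel_nonneg (hd : 0 ≤ d) (ht : 0 ≤ t) (s : ℝ) : 0 ≤ incrKernel d t s :=
  sub_nonneg.2 <| rpow_le_rpow (le_max_right _ _) (max_le_max (by linarith) le_rfl) hd

theorem continuous_incrKernel (hd : 0 ≤ d) (t : ℝ) : Continuous (incrKernel d t) := by
  have hplus : Continuous fun s : ℝ => max s 0 ^ d :=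
    (continuous_rpow_const hd).comp (continuous_id.max continuous_const)
  exact hplus.sub (hplus.comp (continuous_id.sub continuous_const))

theorem incrKernel_mul_left (ht : 0 < t) (x : ℝ) :
    incrKernel d t (t * x) = t ^ d * incrKernel d 1 x := by
  have h₁ : max (t * x) 0 = t * max x 0 := by rw [mul_max_of_nonneg _ _ ht.le, mul_zero]
  have h₂ : max (t * x - t) 0 = t * max (x - 1) 0 := by
    rw [mul_max_of_nonneg _ _ ht.le, mul_zero, mul_sub, mul_one]
  rw [incrKernel, incrKernel, h₁, h₂, mul_rpow ht.le (le_max_right _ _),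
    mul_rpow ht.le (le_max_right _ _), mul_sub]

theorem incrKernel_le (hd₀ : 0 ≤ d) (hd₁ : d ≤ 1) (ht : 0 ≤ t) {s : ℝ} (hs : t < s) :
    incrKernel d t s ≤ d * t * (s - t) ^ (d - 1) := by
  have hst : 0 < s - t := sub_pos.2 hs
  have hbern : (1 + t / (s - t)) ^ d ≤ 1 + d * (t / (s - t)) :=
    rpow_one_add_le_one_add_mul_self (by linarith [div_nonneg ht hst.le]) hd₀ hd₁
  have hsplit : s = (s - t) * (1 + t / (s - t)) := by field_simp; ring
  have hpow : s ^ d ≤ (s - t) ^ d + d * t * (s - t) ^ (d - 1) :=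
    calc s ^ d = (s - t) ^ d * (1 + t / (s - t)) ^ d := by
          rw [← mul_rpow hst.le (by positivity), ← hsplit]
      _ ≤ (s - t) ^ d * (1 + d * (t / (s - t))) :=
          mul_le_mul_of_nonneg_left hbern (rpow_nonneg hst.le d)
      _ = (s - t) ^ d + d * t * ((s - t) ^ d / (s - t)) := by ring
      _ = (s - t) ^ d + d * t * (s - t) ^ (d - 1) := by rw [rpow_sub_one hst.ne']
  rw [incrKernel, max_eq_left (by linarith), max_eq_left hst.le]
  linarith

end IncrKernel

section Integrability

variable {d t : ℝ}

theorem integrableOn_Ioi_incrKernel_sq (hd₀ : 0 ≤ d) (hd : d < 1 / 2) (ht : 0 ≤ t) :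
    IntegrableOn (fun s => incrKernel d t s ^ 2) (Set.Ioi (t + 1)) := by
  have hdom : IntegrableOn (fun s => (d * t) ^ 2 * (s - t) ^ (2 * d - 2)) (Set.Ioi (t + 1)) := by
    have hshift := (measurePreserving_sub_right volume t).integrableOn_comp_preimage
      (measurableEmbedding_subRight t) (f := fun x : ℝ => x ^ (2 * d - 2)) (s := Set.Ioi 1)
    rw [Set.preimage_sub_const_Ioi, add_comm] at hshift
    exact (hshift.2 (integrableOn_Ioi_rpow_of_lt (by linarith) one_pos)).const_mul _
  refine hdom.mono' ((continuous_incrKernel hd₀ t).pow 2).aestronglyMeasurable.restrict ?_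
  refine (ae_restrict_iff' measurableSet_Ioi).2 (ae_of_all _ fun s hs => ?_)
  have hst : 0 < s - t := by linarith [Set.mem_Ioi.1 hs]
  have hsq : (s - t) ^ (2 * d - 2) = ((s - t) ^ (d - 1)) ^ 2 := by
    rw [← rpow_natCast, ← rpow_mul hst.le]
    ring_nf
  rw [Real.norm_eq_abs, abs_of_nonneg (sq_nonneg _), hsq, ← mul_pow]
  exact pow_le_pow_left₀ (incrKernel_nonneg hd₀ ht s)
    ((incrKernel_le hd₀ (by linarith) ht (by linarith)).trans_eq (by ring)) 2

theorem memLp_incrKernel_of_nonneg (hd₀ : 0 ≤ d) (hd : d < 1 / 2) (ht : 0 ≤ t) :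
    MemLp (incrKernel d t) 2 := by
  have hcont := continuous_incrKernel hd₀ t
  refine (memLp_two_iff_integrable_sq hcont.aestronglyMeasurable).2 ?_
  have hnear : IntegrableOn (fun s => incrKernel d t s ^ 2) (Set.Iic (t + 1)) :=
    ((hcont.pow 2).integrableOn_Icc (a := 0) (b := t + 1)).of_forall_sdiff_eq_zero
      measurableSet_Iic fun s hs => by
        simp [incrKernel_of_nonpos ht (not_le.1 fun h => hs.2 ⟨h, hs.1⟩).le]
  rw [← integrableOn_univ, ← Set.Iic_union_Ioi (a := t + 1)]
  exact hnear.union (integrableOn_Ioi_incrKernel_sq hd₀ hd ht)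

theorem memLp_incrKernel (hd₀ : 0 ≤ d) (hd : d < 1 / 2) (t : ℝ) : MemLp (incrKernel d t) 2 := by
  rcases le_total 0 t with ht | ht
  · exact memLp_incrKernel_of_nonneg hd₀ hd ht
  · have hneg := (memLp_incrKernel_of_nonneg hd₀ hd (neg_nonneg.2 ht)).comp_measurePreserving
      (measurePreserving_sub_right volume t)
    have heq : incrKernel d t = -(incrKernel d (-t) ∘ fun s => s - t) := by
      funext s
      simp [incrKernel_neg]
    exact heq ▸ hneg.neg

end Integrability

noncomputable def incrNormSq (d t : ℝ) : ℝ := ∫ s, incrKernel d t s ^ 2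

section NormSq

variable {d : ℝ}

theorem incrNormSq_neg (d t : ℝ) : incrNormSq d (-t) = incrNormSq d t := by
  simp_rw [incrNormSq, incrKernel_neg, neg_sq]
  exact integral_add_right_eq_self (fun s => incrKernel d t s ^ 2) t

theorem incrNormSq_zero (d : ℝ) : incrNormSq d 0 = 0 := by
  simp [incrNormSq]

theorem incrNormSq_of_pos {t : ℝ} (ht : 0 < t) :
    incrNormSq d t = t ^ (2 * d + 1) * incrNormSq d 1 := by
  have hscale := Measure.integral_comp_mul_left (fun s => incrKernel d t s ^ 2) t
  simp_rw [incrKernel_mul_left ht, mul_pow] at hscale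
  rw [integral_const_mul, smul_eq_mul, abs_of_pos (inv_pos.2 ht)] at hscale
  have hpow : t ^ (2 * d + 1) = t * (t ^ d) ^ 2 := by
    rw [rpow_add ht, rpow_one, mul_comm 2 d, rpow_mul ht.le, rpow_two, mul_comm]
  rw [hpow, incrNormSq, incrNormSq, mul_assoc, hscale, ← mul_assoc, mul_inv_cancel₀ ht.ne', one_mul]

theorem incrNormSq_eq (hd : 2 * d + 1 ≠ 0) (t : ℝ) :
    incrNormSq d t = |t| ^ (2 * d + 1) * incrNormSq d 1 := by
  rcases lt_trichotomy t 0 with ht | rfl | ht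
  · rw [← incrNormSq_neg, incrNormSq_of_pos (neg_pos.2 ht), abs_of_neg ht]
  · rw [incrNormSq_zero, abs_zero, zero_rpow hd, zero_mul]
  · rw [incrNormSq_of_pos ht, abs_of_pos ht]

theorem incrNormSq_one_pos (hd₀ : 0 < d) (hd : d < 1 / 2) : 0 < incrNormSq d 1 := by
  have hsupp : Set.Ioo 0 1 ⊆ Function.support fun s => incrKernel d 1 s ^ 2 := by
    intro s hs
    have hval : incrKernel d 1 s = s ^ d := by
      rw [incrKernel, max_eq_left hs.1.le, max_eq_right (by linarith [hs.2]), zero_rpow hd₀.ne',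
        sub_zero]
    rw [Function.mem_support, hval]
    exact pow_ne_zero 2 (rpow_pos_of_pos hs.1 d).ne'
  rw [incrNormSq, integral_pos_iff_support_of_nonneg (fun s => sq_nonneg _)
    (memLp_incrKernel hd₀.le hd 1).integrable_sq]
  exact (by simp : (0 : ℝ≥0∞) < volume (Set.Ioo (0 : ℝ) 1)).trans_le (measure_mono hsupp)

theorem integral_incrKernel_mul (hd₀ : 0 ≤ d) (hd : d < 1 / 2) (t u : ℝ) :
    ∫ s, incrKernel d t s * incrKernel d u s
      = (incrNormSq d t + incrNormSq d u - incrNormSq d (t - u)) / 2 := by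
  rw [integral_mul_eq_of_memLp_two (memLp_incrKernel hd₀ hd t) (memLp_incrKernel hd₀ hd u)]
  simp_rw [incrKernel_sub_incrKernel]
  rw [integral_sub_right_eq_self (fun s => incrKernel d (t - u) s ^ 2) u]
  rfl

theorem integral_incrKernel_one_mul_add (hd₀ : 0 ≤ d) (hd : d < 1 / 2) (h : ℝ) :
    ∫ s, incrKernel d 1 s * incrKernel d 1 (s + h)
      = incrNormSq d 1 / 2 * (|h + 1| ^ (2 * d + 1) - 2 * |h| ^ (2 * d + 1)
          + |h - 1| ^ (2 * d + 1)) := by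
  have hshift (s : ℝ) : incrKernel d 1 (s + h) = incrKernel d (1 - h) s - incrKernel d (-h) s := by
    rw [incrKernel_sub_incrKernel, sub_neg_eq_add, sub_neg_eq_add, sub_add_cancel]
  have hint (t : ℝ) : Integrable fun s => incrKernel d 1 s * incrKernel d t s :=
    (memLp_incrKernel hd₀ hd 1).integrable_mul (memLp_incrKernel hd₀ hd t)
  simp_rw [hshift, mul_sub]
  rw [integral_sub (hint _) (hint _), integral_incrKernel_mul hd₀ hd,
    integral_incrKernel_mul hd₀ hd, sub_sub_cancel, sub_neg_eq_add, incrNormSq_neg]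
  have hα : 2 * d + 1 ≠ 0 := by linarith
  rw [incrNormSq_eq hα (1 - h), incrNormSq_eq hα h, incrNormSq_eq hα (1 + h), abs_sub_comm 1 h,
    add_comm 1 h]
  ring

end NormSq

/-- for `d ∈ (0,1/2)` there exists `C(d) > 0` such that for all `h ∈ ℝ`,
`∫ f_d(s) f_d(s+h) ds = (C(d)/2)(|h+1|^{2d+1} − 2|h|^{2d+1} + |h−1|^{2d+1})`,
with `C(d) = ∫ f_d(s)² ds`. -/
theorem statement11 (d : ℝ) (hd : d ∈ Set.Ioo (0 : ℝ) (1 / 2)) :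
    ∃ C : ℝ, 0 < C
      ∧ (∀ h : ℝ,
          (∫ s : ℝ, fracKernel d s * fracKernel d (s + h))
            = C / 2 * (|h + 1| ^ (2 * d + 1) - 2 * |h| ^ (2 * d + 1)
                + |h - 1| ^ (2 * d + 1)))
      ∧ C = ∫ s : ℝ, fracKernel d s ^ 2 := by
  obtain ⟨hd₀, hd⟩ := hd
  have hΓ : 0 < Real.Gamma (d + 1) := Real.Gamma_pos_of_pos (by linarith)
  refine ⟨incrNormSq d 1 / Real.Gamma (d + 1) ^ 2,
    div_pos (incrNormSq_one_pos hd₀ hd) (by positivity), fun h => ?_, ?_⟩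
  · simp_rw [fracKernel_eq_incrKernel, div_mul_div_comm, ← sq]
    rw [integral_div, integral_incrKernel_one_mul_add hd₀.le hd]
    ring
  · simp_rw [fracKernel_eq_incrKernel, div_pow]
    rw [integral_div, incrNormSq]
end

section
/- Let d ∈ (0, 1/2) and for m ∈ ℕ, m ≥ 1, define f_m(s) = ((m−s)_+^d − (−s)_+^d)/Γ(d+1). Then ∫_ℝ f_m(s)² ds = m^{2d+1} ∫_ℝ f_1(s)² ds for every m, and there exists a constant C' > 0 such that ∫_ℝ f_m(s)⁴ ds ≤ C' m^{4d+1} for every m ≥ 1. -/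
open MeasureTheory Real
open scoped ENNReal

/-- The kernel `f_m(s) = ((m−s)₊^d − (−s)₊^d)/Γ(d+1)` of the fractional Lévy process
evaluated at time `m`. -/
noncomputable def fracKernelM (d : ℝ) (m : ℕ) (s : ℝ) : ℝ :=
  (max ((m : ℝ) - s) 0 ^ d - max (-s) 0 ^ d) / Real.Gamma (d + 1)

/-! The kernel is self-similar: `f_m(s) = m^d f_1(s/m)`, so the substitution `s = m u` turns
`∫ f_m^p` into `m^{pd+1} ∫ f_1^p`. For `p = 4` this gives the bound with `C' = ∫ f_1⁴ + 1`. -/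

lemma fracKernelM_eq_rpow_mul (d : ℝ) {m : ℕ} (hm : 0 < m) (s : ℝ) :
    fracKernelM d m s = (m : ℝ) ^ d * fracKernelM d 1 (s / m) := by
  have hm0 : (0 : ℝ) < m := by exact_mod_cast hm
  have h_shift : max ((1 : ℕ) - s / m) 0 = max ((m : ℝ) - s) 0 / m := by
    rw [← max_div_div_right hm0.le, zero_div, Nat.cast_one, sub_div, div_self hm0.ne']
  have h_neg : max (-(s / m)) 0 = max (-s) 0 / m := by
    rw [← max_div_div_right hm0.le, zero_div, neg_div]
  unfold fracKernelM
  rw [h_shift, h_neg, div_rpow (le_max_right _ _) hm0.le, div_rpow (le_max_right _ _) hm0.le]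
  field_simp

lemma integral_fracKernelM_pow (d : ℝ) (p : ℕ) {m : ℕ} (hm : 0 < m) :
    ∫ s, fracKernelM d m s ^ p = (m : ℝ) ^ (p * d + 1) * ∫ s, fracKernelM d 1 s ^ p := by
  have hm0 : (0 : ℝ) < m := by exact_mod_cast hm
  calc ∫ s, fracKernelM d m s ^ p
      = ∫ s, ((m : ℝ) ^ d) ^ p * fracKernelM d 1 (s / m) ^ p := by
        simp only [fracKernelM_eq_rpow_mul d hm, mul_pow]
    _ = ((m : ℝ) ^ d) ^ p * (|(m : ℝ)| * ∫ s, fracKernelM d 1 s ^ p) := by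
        rw [integral_const_mul, Measure.integral_comp_div (fun s ↦ fracKernelM d 1 s ^ p),
          smul_eq_mul]
    _ = (m : ℝ) ^ (p * d + 1) * ∫ s, fracKernelM d 1 s ^ p := by
        rw [abs_of_pos hm0, ← mul_assoc, ← rpow_natCast, ← rpow_mul hm0.le,
          rpow_add hm0, rpow_one, mul_comm d]

theorem statement13_general (d : ℝ) :
    (∀ m : ℕ, 1 ≤ m →
        (∫ s : ℝ, fracKernelM d m s ^ 2)
          = (m : ℝ) ^ (2 * d + 1) * ∫ s : ℝ, fracKernelM d 1 s ^ 2)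
    ∧ ∃ C' : ℝ, 0 < C' ∧ ∀ m : ℕ, 1 ≤ m →
        (∫ s : ℝ, fracKernelM d m s ^ 4) ≤ C' * (m : ℝ) ^ (4 * d + 1) := by
  have h_fourth_nonneg : 0 ≤ ∫ s, fracKernelM d 1 s ^ 4 :=
    integral_nonneg fun s ↦ by positivity
  refine ⟨fun m hm ↦ by exact_mod_cast integral_fracKernelM_pow d 2 hm,
    ⟨(∫ s, fracKernelM d 1 s ^ 4) + 1, by positivity, fun m hm ↦ ?_⟩⟩
  rw [integral_fracKernelM_pow d 4 hm, mul_comm, Nat.cast_ofNat]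
  gcongr
  linarith

/-- for `d ∈ (0,1/2)`, one has `∫ f_m(s)² ds = m^{2d+1} ∫ f_1(s)² ds`
for every `m ≥ 1`, and there is a constant `C' > 0` with
`∫ f_m(s)⁴ ds ≤ C' m^{4d+1}` for every `m ≥ 1`. -/
theorem statement13 (d : ℝ) (hd : d ∈ Set.Ioo (0 : ℝ) (1 / 2)) :
    (∀ m : ℕ, 1 ≤ m →
        (∫ s : ℝ, fracKernelM d m s ^ 2)
          = (m : ℝ) ^ (2 * d + 1) * ∫ s : ℝ, fracKernelM d 1 s ^ 2)
    ∧ ∃ C' : ℝ, 0 < C' ∧ ∀ m : ℕ, 1 ≤ m →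
        (∫ s : ℝ, fracKernelM d m s ^ 4) ≤ C' * (m : ℝ) ^ (4 * d + 1) :=
  statement13_general d
end

section
/- Let d ∈ (0, 1/2). Then for every u ∈ (0,1), Σ_{k∈ℤ} ( (u+k)_+^d − (u+k−1)_+^d )² ≤ 1 + Σ_{k≥1} k^{2d} ( (1 + 1/k)^d − (1 − 1/k)^d )², and this bound is finite; in particular the function u ↦ Σ_{k∈ℤ} ( (u+k)_+^d − (u+k−1)_+^d )² is essentially bounded on [0,1]. -/
/-!
Only the indices `k ≥ 0` contribute. The term `k = 0` is `u^(2d) ≤ 1`, and by monotonicity of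
`x ↦ x^d` the term `k = n + 1` is at most `((n+2)^d - n^d)^2`, which is exactly the `n`-th term of
the bounding series. Concavity gives `(n+2)^d - n^d ≤ 2d n^(d-1)`, so that series is dominated by
`∑ n^(2d-2)`, which converges because `d < 1/2`. The bound holds for every `u ∈ [0,1]`, hence
almost everywhere there.
-/

open MeasureTheory Real

namespace FractionalKernel

variable {d : ℝ}

/-- `incrSq d x = Γ(d+1)² f_d(x)²` for the fractional kernel `f_d`. -/
noncomputable def incrSq (d x : ℝ) : ℝ := (max x 0 ^ d - max (x - 1) 0 ^ d) ^ 2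

noncomputable def boundTerm (d : ℝ) (k : ℕ) : ℝ :=
  ((k : ℝ) + 1) ^ (2 * d) * ((1 + 1 / ((k : ℝ) + 1)) ^ d - (1 - 1 / ((k : ℝ) + 1)) ^ d) ^ 2

lemma rpow_add_sub_rpow_le (hd0 : 0 ≤ d) (hd1 : d ≤ 1) {x h : ℝ} (hx : 0 < x) (hh : 0 ≤ h) :
    (x + h) ^ d - x ^ d ≤ d * h * x ^ (d - 1) := by
  have hsplit : (x + h) ^ d = x ^ d * (1 + h / x) ^ d := by
    rw [← mul_rpow hx.le (by positivity)]
    congr 1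
    field_simp
  have hbernoulli : (1 + h / x) ^ d ≤ 1 + d * (h / x) :=
    rpow_one_add_le_one_add_mul_self (by linarith [div_nonneg hh hx.le]) hd0 hd1
  have hdiv : x ^ d * (h / x) = h * x ^ (d - 1) := by
    rw [rpow_sub hx, rpow_one]
    ring
  calc (x + h) ^ d - x ^ d = x ^ d * (1 + h / x) ^ d - x ^ d := by rw [hsplit]
    _ ≤ x ^ d * (1 + d * (h / x)) - x ^ d := by gcongr
    _ = d * h * x ^ (d - 1) := by rw [mul_add, mul_left_comm, hdiv]; ring

lemma boundTerm_eq (d : ℝ) (k : ℕ) :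
    boundTerm d k = (((k : ℝ) + 2) ^ d - (k : ℝ) ^ d) ^ 2 := by
  have hk : (0 : ℝ) < (k : ℝ) + 1 := by positivity
  have hsq : ((k : ℝ) + 1) ^ (2 * d) = (((k : ℝ) + 1) ^ d) ^ 2 := by
    rw [mul_comm, rpow_mul hk.le]
    norm_cast
  have hplus : ((k : ℝ) + 1) ^ d * (1 + 1 / ((k : ℝ) + 1)) ^ d = ((k : ℝ) + 2) ^ d := by
    rw [← mul_rpow hk.le (by positivity)]
    congr 1
    field_simp
    ring
  have hminus : ((k : ℝ) + 1) ^ d * (1 - 1 / ((k : ℝ) + 1)) ^ d = (k : ℝ) ^ d := by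
    have : (0 : ℝ) ≤ 1 - 1 / ((k : ℝ) + 1) := by
      rw [sub_nonneg, div_le_one hk]
      linarith [k.cast_nonneg (α := ℝ)]
    rw [← mul_rpow hk.le this]
    congr 1
    field_simp
    ring
  rw [boundTerm, hsq, ← mul_pow, mul_sub, hplus, hminus]

lemma summable_boundTerm (hd0 : 0 ≤ d) (hd : d < 1 / 2) : Summable (boundTerm d) := by
  rw [← summable_nat_add_iff 1]
  have hmajorant : Summable fun k : ℕ => (2 * d) ^ 2 * ((k + 1 : ℕ) : ℝ) ^ (2 * d - 2) :=
    ((summable_nat_add_iff 1).mpr (summable_nat_rpow.mpr (by linarith))).mul_left _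
  refine hmajorant.of_nonneg_of_le (fun k => by rw [boundTerm_eq]; positivity) fun k => ?_
  have hx : (0 : ℝ) < ((k + 1 : ℕ) : ℝ) := by positivity
  have hmono : ((k + 1 : ℕ) : ℝ) ^ d ≤ ((k + 1 : ℕ) + 2 : ℝ) ^ d :=
    rpow_le_rpow hx.le (by linarith) hd0
  calc boundTerm d (k + 1) = (((k + 1 : ℕ) + 2 : ℝ) ^ d - ((k + 1 : ℕ) : ℝ) ^ d) ^ 2 :=
        boundTerm_eq d (k + 1)
    _ ≤ (d * 2 * ((k + 1 : ℕ) : ℝ) ^ (d - 1)) ^ 2 :=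
        pow_le_pow_left₀ (by linarith) (rpow_add_sub_rpow_le hd0 (by linarith) hx zero_le_two) 2
    _ = (2 * d) ^ 2 * ((k + 1 : ℕ) : ℝ) ^ (2 * d - 2) := by
        rw [mul_pow, ← rpow_natCast (_ ^ (d - 1)), ← rpow_mul hx.le]
        ring_nf

lemma incrSq_of_nonpos {x : ℝ} (hx : x ≤ 0) : incrSq d x = 0 := by
  simp [incrSq, max_eq_right hx, max_eq_right (by linarith : x - 1 ≤ 0)]

lemma incrSq_le_one (hd0 : 0 < d) {x : ℝ} (hx0 : 0 ≤ x) (hx1 : x ≤ 1) : incrSq d x ≤ 1 := by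
  rw [incrSq, max_eq_left hx0, max_eq_right (by linarith), zero_rpow hd0.ne', sub_zero]
  exact pow_le_one₀ (rpow_nonneg hx0 d) (rpow_le_one hx0 hx1 hd0.le)

lemma incrSq_add_succ_le_boundTerm (hd0 : 0 ≤ d) {u : ℝ} (hu : u ∈ Set.Icc (0 : ℝ) 1)
    (n : ℕ) :
    incrSq d (u + (n + 1 : ℕ)) ≤ boundTerm d n := by
  obtain ⟨hu0, hu1⟩ := hu
  have hn := n.cast_nonneg (α := ℝ)
  have hupper : (u + n + 1) ^ d ≤ ((n : ℝ) + 2) ^ d :=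
    rpow_le_rpow (by linarith) (by linarith) hd0
  have hlower : (n : ℝ) ^ d ≤ (u + n) ^ d := rpow_le_rpow hn (by linarith) hd0
  have hincr : (u + n) ^ d ≤ (u + n + 1) ^ d := rpow_le_rpow (by linarith) (by linarith) hd0
  rw [incrSq, boundTerm_eq, Nat.cast_succ, max_eq_left (by linarith), max_eq_left (by linarith),
    ← add_assoc, add_sub_cancel_right]
  exact pow_le_pow_left₀ (by linarith) (by linarith) 2

lemma tsum_incrSq_le (hd0 : 0 < d) (hd : d < 1 / 2) {u : ℝ} (hu : u ∈ Set.Icc (0 : ℝ) 1) :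
    ∑' k : ℤ, incrSq d (u + k) ≤ 1 + ∑' n : ℕ, boundTerm d n := by
  have hsupport :
      Function.support (fun k : ℤ => incrSq d (u + k)) ⊆ Set.range ((↑) : ℕ → ℤ) := by
    rintro (n | n) hn
    · exact ⟨n, rfl⟩
    · refine absurd (incrSq_of_nonpos ?_) hn
      rw [Int.cast_negSucc, Nat.cast_succ]
      linarith [hu.2, n.cast_nonneg (α := ℝ)]
  have hnat : ∑' k : ℤ, incrSq d (u + k) = ∑' n : ℕ, incrSq d (u + n) := by
    rw [← Nat.cast_injective.tsum_eq hsupport]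
    simp only [Int.cast_natCast]
  have hbound := summable_boundTerm hd0.le hd
  have hsucc : Summable fun n : ℕ => incrSq d (u + (n + 1 : ℕ)) :=
    hbound.of_nonneg_of_le (fun _ => sq_nonneg _) (incrSq_add_succ_le_boundTerm hd0.le hu)
  have hsummable := (summable_nat_add_iff (f := fun n : ℕ => incrSq d (u + n)) 1).mp hsucc
  rw [hnat, hsummable.tsum_eq_zero_add]
  refine add_le_add ?_ (hsucc.tsum_le_tsum (incrSq_add_succ_le_boundTerm hd0.le hu) hbound)
  rw [Nat.cast_zero, add_zero]
  exact incrSq_le_one hd0 hu.1 hu.2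

end FractionalKernel

open FractionalKernel in
/-- for `d ∈ (0,1/2)` and every `u ∈ (0,1)`,
`∑_{k∈ℤ} ((u+k)₊^d − (u+k−1)₊^d)² ≤ 1 + ∑_{k≥1} k^{2d} ((1+1/k)^d − (1−1/k)^d)²`,
the bound being finite; in particular `u ↦ ∑_{k∈ℤ} ((u+k)₊^d − (u+k−1)₊^d)²` is
essentially bounded on `[0,1]`. -/
theorem statement15 (d : ℝ) (hd : d ∈ Set.Ioo (0 : ℝ) (1 / 2)) :
    (∀ u ∈ Set.Ioo (0 : ℝ) 1,
        (∑' k : ℤ, (max (u + (k : ℝ)) 0 ^ d - max (u + (k : ℝ) - 1) 0 ^ d) ^ 2)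
          ≤ 1 + ∑' k : ℕ, ((k : ℝ) + 1) ^ (2 * d)
              * ((1 + 1 / ((k : ℝ) + 1)) ^ d - (1 - 1 / ((k : ℝ) + 1)) ^ d) ^ 2)
    ∧ Summable (fun k : ℕ => ((k : ℝ) + 1) ^ (2 * d)
        * ((1 + 1 / ((k : ℝ) + 1)) ^ d - (1 - 1 / ((k : ℝ) + 1)) ^ d) ^ 2)
    ∧ ∃ B : ℝ, ∀ᵐ u ∂(volume.restrict (Set.Icc (0 : ℝ) 1)),
        (∑' k : ℤ, (max (u + (k : ℝ)) 0 ^ d - max (u + (k : ℝ) - 1) 0 ^ d) ^ 2) ≤ B := by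
  obtain ⟨hd0, hd⟩ := hd
  refine ⟨fun u hu => tsum_incrSq_le hd0 hd (Set.Ioo_subset_Icc_self hu),
    summable_boundTerm hd0.le hd, 1 + ∑' n : ℕ, boundTerm d n, ?_⟩
  filter_upwards [ae_restrict_mem measurableSet_Icc] with u hu
  exact tsum_incrSq_le hd0 hd hu
end

section
/- The function φ : (0, 1/2) → ℝ defined by φ(d) = ( −3^{2d+1} + 4·2^{2d+1} − 7 ) / ( 8 − 2^{2d+2} ) is strictly increasing on (0, 1/2). -/
open Real

/-!
With `x = 2^{2d}` and `y = 3^{2d}` the function is `-2 + (3/4) (y - 3)/(x - 2)`. Since `y = x^α`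
with `α = log₂ 3 > 1` and `3 = 2^α`, the quotient is the slope of the chord of the strictly convex
function `p ↦ p^α` between `x` and `2`, which increases with `x`, hence with `d`.
-/

theorem rpow_eq_rpow_logb_rpow {a : ℝ} (ha₀ : 0 < a) (ha₁ : a ≠ 1) {b : ℝ} (hb : 0 < b) (u : ℝ) :
    b ^ u = (a ^ u) ^ logb a b := by
  rw [← rpow_mul ha₀.le, mul_comm, rpow_mul ha₀.le, rpow_logb ha₀ ha₁ hb]

theorem strictMonoOn_rpow_sub_div_rpow_sub {a b : ℝ} (ha : 1 < a) (hab : a < b) :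
    StrictMonoOn (fun u : ℝ => (b ^ u - b) / (a ^ u - a)) {1}ᶜ := by
  have ha₀ : 0 < a := by linarith
  have hb : 0 < b := by linarith
  have hα : 1 < logb a b := by rwa [lt_logb_iff_rpow_lt ha hb, rpow_one]
  have hconv := strictConvexOn_rpow hα
  have hne (u : ℝ) (hu : u ∈ ({1}ᶜ : Set ℝ)) : a ^ u ≠ a :=
    fun h => hu ((rpow_right_inj ha₀ ha.ne').mp (h.trans (rpow_one a).symm))
  intro x hx y hy hxy
  have key := hconv.secant_strict_mono (a := a) ha₀.le (rpow_nonneg ha₀.le x)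
    (rpow_nonneg ha₀.le y) (hne x hx) (hne y hy) (rpow_lt_rpow_of_exponent_lt ha hxy)
  rwa [rpow_logb ha₀ ha.ne' hb, ← rpow_eq_rpow_logb_rpow ha₀ ha.ne' hb,
    ← rpow_eq_rpow_logb_rpow ha₀ ha.ne' hb] at key

theorem autocorr_formula_eq_secant {d : ℝ} (hd : d ≠ 1 / 2) :
    (-(3 : ℝ) ^ (2 * d + 1) + 4 * (2 : ℝ) ^ (2 * d + 1) - 7) / (8 - (2 : ℝ) ^ (2 * d + 2))
      = -2 + 3 / 4 * (((3 : ℝ) ^ (2 * d) - 3) / ((2 : ℝ) ^ (2 * d) - 2)) := by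
  have h : (2 : ℝ) ^ (2 * d) - 2 ≠ 0 := by
    intro h
    apply hd
    have := (rpow_right_inj two_pos (by norm_num)).mp ((sub_eq_zero.mp h).trans (rpow_one 2).symm)
    linarith
  rw [rpow_add three_pos, rpow_add two_pos, rpow_add two_pos, rpow_one, rpow_one, rpow_two]
  generalize (2 : ℝ) ^ (2 * d) = x at h ⊢
  generalize (3 : ℝ) ^ (2 * d) = y
  rw [show 8 - x * 2 ^ 2 = -4 * (x - 2) by ring]
  field_simp
  ring

/-- the function
`φ(d) = (−3^{2d+1} + 4·2^{2d+1} − 7)/(8 − 2^{2d+2})`, the lag-one autocorrelation of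
the differenced fractional noise, is strictly increasing on `(0, 1/2)`. -/
theorem statement17 :
    StrictMonoOn
      (fun d : ℝ =>
        (-(3 : ℝ) ^ (2 * d + 1) + 4 * (2 : ℝ) ^ (2 * d + 1) - 7)
          / (8 - (2 : ℝ) ^ (2 * d + 2)))
      (Set.Ioo (0 : ℝ) (1 / 2)) := by
  intro x hx y hy hxy
  have hsecant := strictMonoOn_rpow_sub_div_rpow_sub (a := 2) (b := 3) (by norm_num) (by norm_num)
    (show 2 * x ≠ 1 by linarith [hx.2]) (show 2 * y ≠ 1 by linarith [hy.2]) (by linarith)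
  dsimp only
  rw [autocorr_formula_eq_secant hx.2.ne, autocorr_formula_eq_secant hy.2.ne]
  linarith
end

section
/- Let d ∈ (0, 1/2). Then for every u ∈ [0,1], Σ_{k∈ℤ} ( (u+k)_+^d + (u+k−2)_+^d − 2(u+k−1)_+^d )² ≤ 1 + (2^d + 2)² + Σ_{k≥2} ( k^d − (k−1)^d )², and this bound is finite; in particular the function u ↦ Σ_{k∈ℤ} ( (u+k)_+^d + (u+k−2)_+^d − 2(u+k−1)_+^d )² is essentially bounded on [0,1]. -/
open MeasureTheory Real
open scoped ENNReal

/-! Let `f x = x₊^d + (x-2)₊^d - 2 (x-1)₊^d`. It vanishes for `x ≤ 0` and `|f| ≤ 2` on `[0, 2]`.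
For `x ≥ 2`, `f x` is the difference of two consecutive unit increments of the concave function
`t ↦ t^d`; both are nonnegative and increments decrease, so `|f x| ≤ (y+1)^d - y^d` whenever
`0 ≤ y ≤ x - 2`. Hence the terms `k = 0, 1, 2` contribute at most `4 + 4 + 1`, and the term
`k = n + 3` at most `((n+2)^d - (n+1)^d)²`. By Bernoulli's inequality this is `O(n^(2d-2))`, summable
exactly because `d < 1/2`. -/

theorem ConcaveOn.sub_le_sub_of_le {𝕜 : Type*} [Field 𝕜] [LinearOrder 𝕜] [IsStrictOrderedRing 𝕜]
    {s : Set 𝕜} {f : 𝕜 → 𝕜} (hf : ConcaveOn 𝕜 s f) {x y h : 𝕜} (hx : x ∈ s)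
    (hyh : y + h ∈ s) (hxy : x ≤ y) (hh : 0 < h) :
    f (y + h) - f y ≤ f (x + h) - f x := by
  have hy : y ∈ s := hf.1.ordConnected.out hx hyh ⟨hxy, by linarith⟩
  have hxh : x + h ∈ s := hf.1.ordConnected.out hx hyh ⟨by linarith, by linarith⟩
  have hslope : slope f (y + h) y ≤ slope f x (x + h) :=
    calc slope f (y + h) y
        ≤ slope f (y + h) x :=
          hf.slope_anti hyh ⟨hx, by simp; linarith⟩ ⟨hy, by simp; linarith⟩ hxy
      _ = slope f x (y + h) := slope_comm _ _ _
      _ ≤ slope f x (x + h) :=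
          hf.slope_anti hx ⟨hxh, by simp; linarith⟩ ⟨hyh, by simp; linarith⟩ (by linarith)
  rw [slope_comm, slope_def_field, slope_def_field, add_sub_cancel_left,
    add_sub_cancel_left] at hslope
  exact (div_le_div_iff_of_pos_right hh).1 hslope

theorem Real.rpow_add_one_sub_rpow_le {d x : ℝ} (hd0 : 0 ≤ d) (hd1 : d ≤ 1) (hx : 0 < x) :
    (x + 1) ^ d - x ^ d ≤ d * x ^ (d - 1) := by
  have hbern := rpow_one_add_le_one_add_mul_self (s := x⁻¹) (by linarith [inv_pos.2 hx]) hd0 hd1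
  calc (x + 1) ^ d - x ^ d = x ^ d * (1 + x⁻¹) ^ d - x ^ d := by
        rw [← mul_rpow hx.le (by positivity), mul_add, mul_one, mul_inv_cancel₀ hx.ne']
    _ ≤ x ^ d * (1 + d * x⁻¹) - x ^ d := by gcongr
    _ = d * x ^ (d - 1) := by rw [rpow_sub_one hx.ne']; ring

theorem Real.summable_sq_rpow_add_two_sub_rpow_add_one {d : ℝ} (hd0 : 0 ≤ d) (hd : d < 1 / 2) :
    Summable fun n : ℕ => (((n : ℝ) + 2) ^ d - ((n : ℝ) + 1) ^ d) ^ 2 := by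
  have hp : Summable fun n : ℕ => ((n : ℝ) + 1) ^ (2 * d - 2) := by
    simpa using (summable_nat_add_iff 1).2 (summable_nat_rpow.2 (by linarith : 2 * d - 2 < -1))
  refine (hp.mul_left (d ^ 2)).of_nonneg_of_le (fun n => sq_nonneg _) fun n => ?_
  have hn : (0 : ℝ) < n + 1 := by positivity
  have hinc := rpow_add_one_sub_rpow_le hd0 (by linarith) hn
  rw [add_assoc, one_add_one_eq_two] at hinc
  have hmono : ((n : ℝ) + 1) ^ d ≤ ((n : ℝ) + 2) ^ d := by gcongr; norm_num
  calc (((n : ℝ) + 2) ^ d - ((n : ℝ) + 1) ^ d) ^ 2 ≤ (d * ((n : ℝ) + 1) ^ (d - 1)) ^ 2 := by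
        gcongr
    _ = d ^ 2 * ((n : ℝ) + 1) ^ (2 * d - 2) := by
        rw [mul_pow, ← rpow_mul_natCast hn.le]; ring_nf

/-- `Γ(d+1) f̃_d x` in the paper's notation. -/
noncomputable def posRpowSecondDiff (d x : ℝ) : ℝ :=
  max x 0 ^ d + max (x - 2) 0 ^ d - 2 * max (x - 1) 0 ^ d

section posRpowSecondDiff

variable {d x : ℝ}

theorem posRpowSecondDiff_of_nonpos (hd : 0 < d) (hx : x ≤ 0) : posRpowSecondDiff d x = 0 := by
  simp [posRpowSecondDiff, hx, zero_rpow hd.ne', show x - 2 ≤ 0 by linarith,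
    show x - 1 ≤ 0 by linarith]

theorem sq_posRpowSecondDiff_le_four (hd0 : 0 < d) (hd1 : d ≤ 1) (hx : x ≤ 2) :
    posRpowSecondDiff d x ^ 2 ≤ 4 := by
  have ha : max x 0 ^ d ≤ 2 :=
    (rpow_le_rpow (le_max_right _ _) (max_le hx zero_le_two) hd0.le).trans
      (rpow_le_self_of_one_le one_le_two hd1)
  have hb : max (x - 1) 0 ^ d ≤ 1 :=
    rpow_le_one (le_max_right _ _) (max_le (by linarith) zero_le_one) hd0.le
  have hc : max (x - 2) 0 ^ d = 0 := by
    rw [max_eq_right (by linarith), zero_rpow hd0.ne']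
  have ha0 : 0 ≤ max x 0 ^ d := rpow_nonneg (le_max_right _ _) _
  have hb0 : 0 ≤ max (x - 1) 0 ^ d := rpow_nonneg (le_max_right _ _) _
  rw [posRpowSecondDiff, hc, show (4 : ℝ) = 2 ^ 2 by norm_num]
  exact sq_le_sq' (by linarith) (by linarith)

theorem sq_posRpowSecondDiff_le (hd0 : 0 ≤ d) (hd1 : d ≤ 1) {y : ℝ} (hy : 0 ≤ y)
    (hyx : y + 2 ≤ x) : posRpowSecondDiff d x ^ 2 ≤ ((y + 1) ^ d - y ^ d) ^ 2 := by
  have hconc := concaveOn_rpow hd0 hd1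
  have hinc {a b : ℝ} (ha : 0 ≤ a) (hab : a ≤ b) : (b + 1) ^ d - b ^ d ≤ (a + 1) ^ d - a ^ d :=
    hconc.sub_le_sub_of_le ha (by simp; linarith) hab one_pos
  have hx2 : x ^ d - (x - 1) ^ d ≤ (x - 1) ^ d - (x - 2) ^ d := by
    have := hinc (a := x - 2) (b := x - 1) (by linarith) (by linarith)
    rwa [sub_add_cancel, show x - 2 + 1 = x - 1 by ring] at this
  have hy2 : (x - 1) ^ d - (x - 2) ^ d ≤ (y + 1) ^ d - y ^ d := by
    have := hinc (a := y) (b := x - 2) hy (by linarith)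
    rwa [show x - 2 + 1 = x - 1 by ring] at this
  have hmono : (x - 1) ^ d ≤ x ^ d := by gcongr <;> linarith
  rw [posRpowSecondDiff, max_eq_left (by linarith), max_eq_left (by linarith),
    max_eq_left (by linarith)]
  exact sq_le_sq' (by linarith) (by linarith)

end posRpowSecondDiff

theorem tsum_sq_posRpowSecondDiff_le {d u : ℝ} (hd0 : 0 < d) (hd : d < 1 / 2) (hu0 : 0 ≤ u)
    (hu1 : u ≤ 1) :
    ∑' k : ℤ, posRpowSecondDiff d (u + k) ^ 2
      ≤ 1 + (2 ^ d + 2) ^ 2 + ∑' n : ℕ, (((n : ℝ) + 2) ^ d - ((n : ℝ) + 1) ^ d) ^ 2 := by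
  have hd1 : d ≤ 1 := by linarith
  set G : ℕ → ℝ := fun n => posRpowSecondDiff d (u + n) ^ 2
  have hℤ : ∑' k : ℤ, posRpowSecondDiff d (u + k) ^ 2 = ∑' n : ℕ, G n := by
    refine (Nat.cast_injective.tsum_eq fun k hk0 => ?_).symm
    by_contra hneg
    have hk : k ≤ -1 := by
      contrapose! hneg
      exact ⟨k.toNat, by omega⟩
    replace hk : (k : ℝ) ≤ -1 := by exact_mod_cast hk
    exact hk0 (by
      beta_reduce
      rw [posRpowSecondDiff_of_nonpos hd0 (by linarith), zero_pow two_ne_zero])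
  have hsum := summable_sq_rpow_add_two_sub_rpow_add_one hd0.le hd
  have htail (n : ℕ) : G (n + 3) ≤ (((n : ℝ) + 2) ^ d - ((n : ℝ) + 1) ^ d) ^ 2 := by
    have := sq_posRpowSecondDiff_le hd0.le hd1 (x := u + (n + 3 : ℕ)) (y := n + 1) (by positivity)
      (by push_cast; linarith)
    rwa [add_assoc, one_add_one_eq_two] at this
  have hG : Summable G :=
    (summable_nat_add_iff 3).1 (hsum.of_nonneg_of_le (fun _ => sq_nonneg _) htail)
  have hhead : ∑ i ∈ Finset.range 3, G i ≤ 9 := by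
    have h2 := sq_posRpowSecondDiff_le hd0.le hd1 (x := u + (2 : ℕ)) le_rfl (by push_cast; linarith)
    rw [zero_add, one_rpow, zero_rpow hd0.ne', sub_zero, one_pow] at h2
    simp only [Finset.sum_range_succ, Finset.sum_range_zero]
    have h0 := sq_posRpowSecondDiff_le_four hd0 hd1 (x := u + (0 : ℕ)) (by push_cast; linarith)
    have h1 := sq_posRpowSecondDiff_le_four hd0 hd1 (x := u + (1 : ℕ)) (by push_cast; linarith)
    linarith
  have h2d : 1 ≤ (2 : ℝ) ^ d := one_le_rpow one_le_two hd0.le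
  calc ∑' k : ℤ, posRpowSecondDiff d (u + k) ^ 2
      = ∑ i ∈ Finset.range 3, G i + ∑' n : ℕ, G (n + 3) := by rw [hℤ, hG.sum_add_tsum_nat_add]
    _ ≤ 9 + ∑' n : ℕ, (((n : ℝ) + 2) ^ d - ((n : ℝ) + 1) ^ d) ^ 2 :=
      add_le_add hhead ((summable_nat_add_iff 3).2 hG |>.tsum_le_tsum htail hsum)
    _ ≤ 1 + (2 ^ d + 2) ^ 2 + ∑' n : ℕ, (((n : ℝ) + 2) ^ d - ((n : ℝ) + 1) ^ d) ^ 2 := by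
      nlinarith

/-- for `d ∈ (0,1/2)` and every `u ∈ [0,1]`,
`∑_{k∈ℤ} ((u+k)₊^d + (u+k−2)₊^d − 2(u+k−1)₊^d)² ≤ 1 + (2^d+2)² + ∑_{k≥2} (k^d − (k−1)^d)²`,
the bound being finite; in particular
`u ↦ ∑_{k∈ℤ} ((u+k)₊^d + (u+k−2)₊^d − 2(u+k−1)₊^d)²` is essentially bounded on `[0,1]`. -/
theorem statement18 (d : ℝ) (hd : d ∈ Set.Ioo (0 : ℝ) (1 / 2)) :
    (∀ u ∈ Set.Icc (0 : ℝ) 1,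
        (∑' k : ℤ, (max (u + (k : ℝ)) 0 ^ d + max (u + (k : ℝ) - 2) 0 ^ d
            - 2 * max (u + (k : ℝ) - 1) 0 ^ d) ^ 2)
          ≤ 1 + ((2 : ℝ) ^ d + 2) ^ 2
            + ∑' k : ℕ, (((k : ℝ) + 2) ^ d - ((k : ℝ) + 1) ^ d) ^ 2)
    ∧ Summable (fun k : ℕ => (((k : ℝ) + 2) ^ d - ((k : ℝ) + 1) ^ d) ^ 2)
    ∧ ∃ B : ℝ, ∀ᵐ u ∂(volume.restrict (Set.Icc (0 : ℝ) 1)),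
        (∑' k : ℤ, (max (u + (k : ℝ)) 0 ^ d + max (u + (k : ℝ) - 2) 0 ^ d
            - 2 * max (u + (k : ℝ) - 1) 0 ^ d) ^ 2) ≤ B := by
  obtain ⟨hd0, hd⟩ := hd
  have hbound : ∀ u ∈ Set.Icc (0 : ℝ) 1, ∑' k : ℤ, posRpowSecondDiff d (u + k) ^ 2
      ≤ 1 + (2 ^ d + 2) ^ 2 + ∑' n : ℕ, (((n : ℝ) + 2) ^ d - ((n : ℝ) + 1) ^ d) ^ 2 :=
    fun u hu => tsum_sq_posRpowSecondDiff_le hd0 hd hu.1 hu.2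
  exact ⟨hbound, summable_sq_rpow_add_two_sub_rpow_add_one hd0.le hd, _,
    (ae_restrict_mem measurableSet_Icc).mono hbound⟩
end
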